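/- arXiv:math/0005027 — 2 statements merged into one kernel-verified Lean document; each statement's English description precedes it below -/
import Mathlib

section
/- Let φ, ψ ∈ G satisfy lim_{t→0+} ψ(t)/φ(t) = 0, and let N_E be a symmetric-space norm on [0,1] whose fundamental function is φ, i.e. N_E(χ_{(0,t)}) = φ(t) for all t ∈ (0,1]. Then there is a constant C > 0 such that ‖x‖_{M(ψ̃)} ≤ C·N_E(x) for every measurable x (so E := {x : N_E(x) < ∞} ⊆ M(ψ̃)), and the identity inclusion I : E → M(ψ̃) is disjointly strictly singular: there exist no sequence (x_n) of measurable functions with pairwise disjoint supports and 0 < N_E(x_n) < ∞ for all n, and no constant B > 0, such that N_E(y) ≤ B·‖y‖_{M(ψ̃)} for every y in the linear span of {x_n}. -/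
open MeasureTheory Set Filter Topology
open scoped ENNReal

noncomputable section

/-- Lebesgue measure restricted to `[0,1]`. -/
def mu01 : MeasureTheory.Measure ℝ := MeasureTheory.volume.restrict (Set.Icc (0:ℝ) 1)

/-- Distribution function of `x` on `[0,1]`: `μ{s ∈ [0,1] : |x s| > τ}`. -/
def distr (x : ℝ → ℝ) (τ : ℝ) : ℝ≥0∞ :=
  MeasureTheory.volume {s ∈ Set.Icc (0:ℝ) 1 | τ < |x s|}

/-- Decreasing rearrangement of `x` (as a function on `(0,1]`):
`x*(t) = inf{τ ≥ 0 : μ{|x| > τ} ≤ t}`. -/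
def rearr (x : ℝ → ℝ) (t : ℝ) : ℝ :=
  sInf {τ : ℝ | 0 ≤ τ ∧ distr x τ ≤ ENNReal.ofReal t}

/-- Marcinkiewicz functional `‖x‖_{M(φ̃)} = sup_{0<t≤1} (φ(t)/t) ∫₀^t x*(s) ds`,
for `φ̃(t) = t/φ(t)`. -/
def marcNorm (φ : ℝ → ℝ) (x : ℝ → ℝ) : ℝ≥0∞ :=
  ⨆ t ∈ Set.Ioc (0:ℝ) 1,
    ENNReal.ofReal (φ t / t) * ∫⁻ s in Set.Ioc (0:ℝ) t, ENNReal.ofReal (rearr x s)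

/-- A symmetric-space norm on `[0,1]`: subadditive, absolutely homogeneous,
vanishing exactly on a.e.-zero functions, monotone, rearrangement invariant,
with the Fatou property. -/
structure SymmetricNorm where
  N : (ℝ → ℝ) → ℝ≥0∞
  add_le : ∀ x y : ℝ → ℝ, N (x + y) ≤ N x + N y
  smul_eq : ∀ (c : ℝ) (x : ℝ → ℝ), N (fun t => c * x t) = ENNReal.ofReal |c| * N x
  eq_zero_iff : ∀ x : ℝ → ℝ, Measurable x → (N x = 0 ↔ ∀ᵐ s ∂mu01, x s = 0)
  mono : ∀ x y : ℝ → ℝ, (∀ᵐ s ∂mu01, |x s| ≤ |y s|) → N x ≤ N y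
  symm : ∀ x y : ℝ → ℝ, Measurable x → Measurable y →
    (∀ τ : ℝ, 0 < τ → distr x τ = distr y τ) → N x = N y
  fatou : ∀ (x : ℕ → ℝ → ℝ) (y : ℝ → ℝ),
    (∀ n, ∀ᵐ s ∂mu01, 0 ≤ x n s ∧ x n s ≤ x (n+1) s) →
    (∀ᵐ s ∂mu01, Filter.Tendsto (fun n => x n s) Filter.atTop (nhds (y s))) →
    N y = ⨆ n, N (x n)

/-- Failure of disjoint strict singularity for the identity inclusion of the space with
functional `NE` into the space with functional `NF`: there is a sequence of nonzero
measurable functions with pairwise disjoint supports such that `NE y ≤ B · NF y`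
on their linear span. -/
def DSSFails (NE NF : (ℝ → ℝ) → ℝ≥0∞) : Prop :=
  ∃ (x : ℕ → ℝ → ℝ) (B : ℝ), 0 < B ∧
    (∀ n, Measurable (x n)) ∧
    (∀ n m, n ≠ m → ∀ᵐ s ∂mu01, x n s * x m s = 0) ∧
    (∀ n, 0 < NE (x n) ∧ NE (x n) < ⊤) ∧
    (∀ y ∈ Submodule.span ℝ (Set.range x), NE y ≤ ENNReal.ofReal B * NF y)

open scoped Classical

lemma distr_set_meas {x : ℝ → ℝ} (hx : Measurable x) (τ : ℝ) :
    MeasurableSet {s ∈ Set.Icc (0:ℝ) 1 | τ < |x s|} := by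
  have : {s ∈ Set.Icc (0:ℝ) 1 | τ < |x s|} = Set.Icc (0:ℝ) 1 ∩ {s | τ < |x s|} := rfl
  rw [this]
  exact measurableSet_Icc.inter ((measurableSet_lt measurable_const hx.abs))

lemma distr_anti (x : ℝ → ℝ) : Antitone (distr x) := by
  intro a b hab
  exact measure_mono (fun s hs => ⟨hs.1, lt_of_le_of_lt hab hs.2⟩)

lemma distr_le_one (x : ℝ → ℝ) (τ : ℝ) : distr x τ ≤ 1 := by
  calc distr x τ ≤ volume (Set.Icc (0:ℝ) 1) := measure_mono (fun s hs => hs.1)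
  _ = 1 := by simp

lemma distr_lt_top (x : ℝ → ℝ) (τ : ℝ) : distr x τ < ⊤ :=
  lt_of_le_of_lt (distr_le_one x τ) (by norm_num)

/-- right semicontinuity via union -/
lemma distr_exists_gt {x : ℝ → ℝ} (hx : Measurable x) {τ : ℝ} {a : ℝ≥0∞}
    (h : a < distr x τ) : ∃ n : ℕ, a < distr x (τ + 1/(n+1)) := by
  have hU : {s ∈ Set.Icc (0:ℝ) 1 | τ < |x s|}
      = ⋃ n : ℕ, {s ∈ Set.Icc (0:ℝ) 1 | τ + 1/(n+1) < |x s|} := by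
    ext s
    simp only [Set.mem_setOf_eq, Set.mem_iUnion]
    constructor
    · rintro ⟨hs, hlt⟩
      obtain ⟨n, hn⟩ := exists_nat_one_div_lt (sub_pos.2 hlt)
      exact ⟨n, hs, by linarith⟩
    · rintro ⟨n, hs, hlt⟩
      have h0 : (0:ℝ) < 1/((n:ℝ)+1) := by positivity
      exact ⟨hs, by linarith⟩
  have hdir : Directed (fun x1 x2 => x1 ⊆ x2)
      (fun n : ℕ => {s ∈ Set.Icc (0:ℝ) 1 | τ + 1/(n+1) < |x s|}) := by
    intro m n
    refine ⟨max m n, ?_, ?_⟩ <;> intro s hs <;> refine ⟨hs.1, lt_of_le_of_lt ?_ hs.2⟩ <;>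
      have h1 : (1:ℝ)/(max m n + 1) ≤ 1/(m+1) ∨ True := Or.inr trivial
    · have : (1:ℝ)/(max (m:ℝ) n + 1) ≤ 1/(m+1) := by
        apply one_div_le_one_div_of_le (by positivity); simp [le_max_left]
      have hc : ((max m n : ℕ) : ℝ) = max (m:ℝ) n := by
        simp [Nat.cast_max]
      rw [hc]; linarith
    · have : (1:ℝ)/(max (m:ℝ) n + 1) ≤ 1/(n+1) := by
        apply one_div_le_one_div_of_le (by positivity); simp [le_max_right]
      have hc : ((max m n : ℕ) : ℝ) = max (m:ℝ) n := by
        simp [Nat.cast_max]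
      rw [hc]; linarith
  have := hdir.measure_iUnion (μ := volume)
  rw [distr, hU, this] at h
  rcases lt_iSup_iff.mp h with ⟨n, hn⟩
  exact ⟨n, hn⟩

/-- the defining set of rearr is nonempty for t > 0 -/
lemma rearr_set_nonempty {x : ℝ → ℝ} (hx : Measurable x) {t : ℝ} (ht : 0 < t) :
    ∃ τ : ℝ, 0 ≤ τ ∧ distr x τ ≤ ENNReal.ofReal t := by
  have hI : ⋂ n : ℕ, {s ∈ Set.Icc (0:ℝ) 1 | (n:ℝ) < |x s|} = ∅ := by
    ext s; simp only [Set.mem_iInter, Set.mem_setOf_eq, Set.mem_empty_iff_false, iff_false]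
    intro h
    obtain ⟨n, hn⟩ := exists_nat_gt (|x s|)
    exact absurd (h n).2 (not_lt.2 hn.le)
  have htend : Filter.Tendsto (fun n : ℕ => distr x n) Filter.atTop (nhds 0) := by
    have := MeasureTheory.tendsto_measure_iInter_atTop (μ := volume)
      (s := fun n : ℕ => {s ∈ Set.Icc (0:ℝ) 1 | (n:ℝ) < |x s|})
      (fun n => (distr_set_meas hx n).nullMeasurableSet)
      (fun m n hmn => fun s hs => ⟨hs.1, lt_of_le_of_lt (by exact_mod_cast hmn) hs.2⟩)
      ⟨0, by simpa [distr] using (distr_lt_top x 0).ne⟩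
    rw [hI] at this; simpa [distr, Function.comp_def] using this
  have hev := htend.eventually_le_const (by simpa using ht : (0:ℝ≥0∞) < ENNReal.ofReal t)
  obtain ⟨n, hn⟩ := hev.exists
  exact ⟨n, Nat.cast_nonneg n, hn⟩



lemma rearr_nonneg (x : ℝ → ℝ) (t : ℝ) : 0 ≤ rearr x t :=
  Real.sInf_nonneg (fun τ hτ => hτ.1)

/-- Key equivalence: for `τ ≥ 0`, `s > 0`: `τ < x*(s) ↔ ofReal s < distr x τ`. -/
lemma lt_rearr_iff {x : ℝ → ℝ} (hx : Measurable x) {τ s : ℝ} (hτ : 0 ≤ τ) (hs : 0 < s) :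
    τ < rearr x s ↔ ENNReal.ofReal s < distr x τ := by
  constructor
  · intro h
    by_contra hc
    push_neg at hc
    have : rearr x s ≤ τ := csInf_le ⟨0, fun y hy => hy.1⟩ ⟨hτ, hc⟩
    linarith
  · intro h
    obtain ⟨n, hn⟩ := distr_exists_gt hx h
    have hsub : {τ' : ℝ | 0 ≤ τ' ∧ distr x τ' ≤ ENNReal.ofReal s} ⊆ Set.Ici (τ + 1/(n+1)) := by
      intro τ' hτ'
      by_contra hlt
      simp only [Set.mem_Ici, not_le] at hlt
      have := distr_anti x (le_of_lt hlt)
      exact absurd (le_trans this hτ'.2) (not_le.2 hn)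
    obtain ⟨τ₀, hτ₀⟩ := rearr_set_nonempty hx hs
    have : τ + 1/(n+1) ≤ rearr x s := le_csInf ⟨τ₀, hτ₀⟩ (fun y hy => hsub hy)
    have hp : (0:ℝ) < 1/((n:ℝ)+1) := by positivity
    linarith

/-- the complement direction: `x*(s) ≤ τ ↔ distr x τ ≤ ofReal s` for τ ≥ 0, s > 0. -/
lemma rearr_le_iff {x : ℝ → ℝ} (hx : Measurable x) {τ s : ℝ} (hτ : 0 ≤ τ) (hs : 0 < s) :
    rearr x s ≤ τ ↔ distr x τ ≤ ENNReal.ofReal s := by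
  rw [← not_lt, lt_rearr_iff hx hτ hs, not_lt]

lemma distr_bound_zero {x : ℝ → ℝ} {M : ℝ} (hb : ∀ s, |x s| ≤ M) : distr x M = 0 := by
  have h : {s ∈ Set.Icc (0:ℝ) 1 | M < |x s|} = ∅ := by
    ext s; simp only [Set.mem_setOf_eq, Set.mem_empty_iff_false, iff_false, not_and]
    exact fun _ => not_lt.2 (hb s)
  show volume {s ∈ Set.Icc (0:ℝ) 1 | M < |x s|} = 0
  rw [h]; exact measure_empty

/-- bounded case: if `|x| ≤ M` then `rearr x ≤ M` everywhere. -/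
lemma rearr_le_of_bound {x : ℝ → ℝ} {M : ℝ} (hM : 0 ≤ M) (hb : ∀ s, |x s| ≤ M)
    (t : ℝ) : rearr x t ≤ M := by
  apply csInf_le ⟨0, fun y hy => hy.1⟩
  exact ⟨hM, le_trans (le_of_eq (distr_bound_zero hb)) zero_le⟩

/-- bounded case: rearr is globally antitone. -/
lemma rearr_anti_of_bound {x : ℝ → ℝ} {M : ℝ} (hM : 0 ≤ M) (hb : ∀ s, |x s| ≤ M) :
    Antitone (rearr x) := by
  intro a b hab
  apply csInf_le_csInf ⟨0, fun y hy => hy.1⟩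
  · exact ⟨M, hM, le_trans (le_of_eq (distr_bound_zero hb)) zero_le⟩
  · intro τ hτ
    exact ⟨hτ.1, le_trans hτ.2 (ENNReal.ofReal_le_ofReal hab)⟩

lemma rearr_measurable_of_bound {x : ℝ → ℝ} {M : ℝ} (hM : 0 ≤ M) (hb : ∀ s, |x s| ≤ M) :
    Measurable (rearr x) := (rearr_anti_of_bound hM hb).measurable

/-- truncation: `rearr (min |x| n) = min (rearr x) n` for positive arguments. -/
lemma rearr_trunc {x : ℝ → ℝ} (hx : Measurable x) {M : ℝ} (hM : 0 ≤ M) {s : ℝ} (hs : 0 < s) :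
    rearr (fun u => min |x u| M) s = min (rearr x s) M := by
  have hdistr : ∀ τ : ℝ, distr (fun u => min |x u| M) τ
      = if τ < M then distr x τ else 0 := by
    intro τ
    by_cases h : τ < M
    · simp only [distr, h, if_true]
      congr 1
      ext u
      simp only [Set.mem_setOf_eq, abs_of_nonneg (le_min (abs_nonneg _) hM), lt_min_iff]
      tauto
    · simp only [distr, h, if_false]
      convert measure_empty (μ := volume)
      ext u
      simp only [Set.mem_setOf_eq, Set.mem_empty_iff_false, iff_false, not_and]
      intro _
      rw [abs_of_nonneg (le_min (abs_nonneg _) hM)]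
      push_neg at h
      exact not_lt.2 (le_trans (min_le_right _ _) h)
  -- the defining sets
  have hset : {τ : ℝ | 0 ≤ τ ∧ distr (fun u => min |x u| M) τ ≤ ENNReal.ofReal s}
      = {τ : ℝ | 0 ≤ τ ∧ distr x τ ≤ ENNReal.ofReal s} ∪ Set.Ici M := by
    ext τ
    simp only [Set.mem_setOf_eq, Set.mem_union, Set.mem_Ici, hdistr]
    constructor
    · rintro ⟨h0, hle⟩
      by_cases h : τ < M
      · left; exact ⟨h0, by simpa [h] using hle⟩
      · right; linarith [not_lt.1 h]
    · rintro (⟨h0, hle⟩ | hge)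
      · by_cases h : τ < M
        · exact ⟨h0, by simpa [h] using hle⟩
        · exact ⟨h0, by simp [h]⟩
      · refine ⟨le_trans hM hge, ?_⟩
        by_cases h : τ < M
        · linarith
        · simp [h]
  rw [rearr, hset]
  obtain ⟨τ₀, hτ₀⟩ := rearr_set_nonempty hx hs
  have hne : {τ : ℝ | 0 ≤ τ ∧ distr x τ ≤ ENNReal.ofReal s}.Nonempty := ⟨τ₀, hτ₀⟩
  have hbdd : BddBelow {τ : ℝ | 0 ≤ τ ∧ distr x τ ≤ ENNReal.ofReal s} := ⟨0, fun y hy => hy.1⟩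
  have hu := csInf_union (s := {τ : ℝ | 0 ≤ τ ∧ distr x τ ≤ ENNReal.ofReal s})
    (t := Set.Ici M) hbdd hne ⟨M, fun y hy => hy⟩ ⟨M, le_refl M⟩
  rw [hu, csInf_Ici]
  rfl



def swapB (A : Set ℝ) (c : ℝ) : Set ℝ := {u | u - c ∈ A}

def swapMap (A : Set ℝ) (c : ℝ) (u : ℝ) : ℝ :=
  if u ∈ A then u + c else if u ∈ swapB A c then u - c else u

variable {A : Set ℝ} {c : ℝ}

lemma mem_swapB {u : ℝ} : u ∈ swapB A c ↔ u - c ∈ A := Iff.rfl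

lemma add_mem_swapB {u : ℝ} (hu : u ∈ A) : u + c ∈ swapB A c := by
  rw [mem_swapB]; simpa using hu

lemma swapB_meas (hA : MeasurableSet A) : MeasurableSet (swapB A c) := by
  have : swapB A c = (fun u => u - c) ⁻¹' A := rfl
  rw [this]; exact hA.preimage (measurable_id.sub measurable_const)

lemma swap_disj (hd : ∀ u ∈ A, u + c ∉ A) : Disjoint A (swapB A c) := by
  rw [Set.disjoint_left]
  intro u huA huB
  exact hd (u - c) huB (by simpa using huA)

lemma swapMap_measurable (hA : MeasurableSet A) : Measurable (swapMap A c) := by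
  unfold swapMap
  exact Measurable.ite hA (measurable_id.add_const c)
    (Measurable.ite (swapB_meas hA) (measurable_id.sub measurable_const) measurable_id)

lemma swapMap_mem_A {u : ℝ} (hu : u ∈ A) : swapMap A c u = u + c := if_pos hu

lemma swapMap_mem_B (hd : ∀ u ∈ A, u + c ∉ A) {u : ℝ} (hu : u ∈ swapB A c) :
    swapMap A c u = u - c := by
  have h1 : u ∉ A := (Set.disjoint_right.1 (swap_disj hd)) hu
  unfold swapMap
  rw [if_neg h1, if_pos hu]

lemma swapMap_not_mem {u : ℝ} (hu1 : u ∉ A) (hu2 : u ∉ swapB A c) : swapMap A c u = u := by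
  unfold swapMap
  rw [if_neg hu1, if_neg hu2]

lemma swapMap_maps (hd : ∀ u ∈ A, u + c ∉ A) {u : ℝ} (hu : u ∈ A ∪ swapB A c) :
    swapMap A c u ∈ A ∪ swapB A c := by
  rcases hu with hu | hu
  · right; rw [swapMap_mem_A hu]; exact add_mem_swapB hu
  · left; rw [swapMap_mem_B hd hu]; exact hu

/-- The swap map preserves Lebesgue measure of measurable sets (as preimages). -/
lemma swapMap_preimage_volume (hA : MeasurableSet A) (hd : ∀ u ∈ A, u + c ∉ A)
    {T : Set ℝ} (hT : MeasurableSet T) :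
    volume (swapMap A c ⁻¹' T) = volume T := by
  set B := swapB A c with hBdef
  have hB : MeasurableSet B := swapB_meas hA
  have hdisj : Disjoint A B := swap_disj hd
  have h1 : swapMap A c ⁻¹' T ∩ A = (fun u => u + c) ⁻¹' (T ∩ B) := by
    ext u
    simp only [Set.mem_inter_iff, Set.mem_preimage]
    constructor
    · rintro ⟨hT', hu⟩
      rw [swapMap_mem_A hu] at hT'
      exact ⟨hT', add_mem_swapB hu⟩
    · rintro ⟨hT', hu⟩
      have huA : u ∈ A := by simpa using (mem_swapB.1 hu)
      refine ⟨?_, huA⟩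
      show swapMap A c u ∈ T
      rwa [swapMap_mem_A huA]
  have h2 : swapMap A c ⁻¹' T ∩ B = (fun u => u - c) ⁻¹' (T ∩ A) := by
    ext u
    simp only [Set.mem_inter_iff, Set.mem_preimage]
    constructor
    · rintro ⟨hT', hu⟩
      rw [swapMap_mem_B hd hu] at hT'
      exact ⟨hT', hu⟩
    · rintro ⟨hT', hu⟩
      have huB : u ∈ B := hu
      refine ⟨?_, huB⟩
      show swapMap A c u ∈ T
      rwa [swapMap_mem_B hd huB]
  have h3 : swapMap A c ⁻¹' T \ (A ∪ B) = T \ (A ∪ B) := by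
    ext u
    simp only [Set.mem_diff, Set.mem_preimage, Set.mem_union]
    constructor
    · rintro ⟨hT', hu⟩
      push_neg at hu
      rw [swapMap_not_mem hu.1 hu.2] at hT'
      exact ⟨hT', by push_neg; exact hu⟩
    · rintro ⟨hT', hu⟩
      push_neg at hu
      rw [swapMap_not_mem hu.1 hu.2]
      exact ⟨hT', by push_neg; exact hu⟩
  have hmeasP : MeasurableSet (swapMap A c ⁻¹' T) := hT.preimage (swapMap_measurable hA)
  have hsplit : ∀ S : Set ℝ, MeasurableSet S →
      volume S = volume (S ∩ A) + volume (S ∩ B) + volume (S \ (A ∪ B)) := by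
    intro S hS
    have e1 : S = ((S ∩ A) ∪ (S ∩ B)) ∪ (S \ (A ∪ B)) := by
      ext u; simp only [Set.mem_union, Set.mem_inter_iff, Set.mem_diff]
      by_cases h1 : u ∈ A <;> by_cases h2 : u ∈ B <;> simp [h1, h2]
    conv_lhs => rw [e1]
    rw [measure_union ?disj1 (hS.diff (hA.union hB)), measure_union ?disj2 (hS.inter hB)]
    case disj2 =>
      exact Set.disjoint_of_subset Set.inter_subset_right Set.inter_subset_right hdisj
    case disj1 =>
      rw [Set.disjoint_left]
      rintro u (⟨_, hu⟩ | ⟨_, hu⟩) ⟨_, hnu⟩ <;> exact hnu (by simp [hu])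
  have hvol1 : volume ((fun u => u + c) ⁻¹' (T ∩ B)) = volume (T ∩ B) :=
    measure_preimage_add_right volume c (T ∩ B)
  have hvol2 : volume ((fun u => u - c) ⁻¹' (T ∩ A)) = volume (T ∩ A) := by
    simpa [sub_eq_add_neg] using measure_preimage_add_right (volume : Measure ℝ) (-c) (T ∩ A)
  rw [hsplit _ hmeasP, hsplit _ hT, h1, h2, h3, hvol1, hvol2]
  ring




def rmod (h u : ℝ) : ℝ := u - h * (⌈u / h⌉ - 1)

variable {h u : ℝ}

lemma rmod_mem (hh : 0 < h) (u : ℝ) : rmod h u ∈ Set.Ioc 0 h := by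
  have h1 : u / h ≤ ⌈u / h⌉ := Int.le_ceil _
  have h2 : (⌈u / h⌉ : ℝ) < u / h + 1 := Int.ceil_lt_add_one _
  have hu : u = h * (u / h) := by field_simp
  constructor
  · rw [rmod]; nlinarith
  · rw [rmod]; nlinarith

lemma sub_rmod_int (h u : ℝ) : ∃ m : ℤ, u - rmod h u = h * m :=
  ⟨⌈u / h⌉ - 1, by rw [rmod]; push_cast; ring⟩

lemma rmod_unique (hh : 0 < h) {r : ℝ} (hr : r ∈ Set.Ioc 0 h)
    (hm : ∃ m : ℤ, u - r = h * m) : rmod h u = r := by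
  obtain ⟨m, hm⟩ := hm
  obtain ⟨m', hm'⟩ := sub_rmod_int h u
  have hrm := rmod_mem hh u
  have hdiff : rmod h u - r = h * (m - m') := by push_cast; nlinarith [hm, hm']
  have habs : |rmod h u - r| < h := by
    rw [abs_lt]
    constructor <;> [nlinarith [hrm.1, hrm.2, hr.1, hr.2]; nlinarith [hrm.1, hrm.2, hr.1, hr.2]]
  have : |(m - m' : ℤ)| < 1 := by
    have h1 : h * |(m:ℝ) - m'| = |rmod h u - r| := by rw [hdiff, abs_mul, abs_of_pos hh]
    have hcast : |(m:ℝ) - m'| < 1 := by nlinarith [abs_nonneg ((m:ℝ) - m')]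
    have : |((m - m' : ℤ) : ℝ)| < 1 := by push_cast; exact hcast
    exact_mod_cast this
  have : m - m' = 0 := Int.abs_lt_one_iff.mp this
  have : (m : ℝ) = m' := by
    have := sub_eq_zero.mp (by exact_mod_cast this)
    exact_mod_cast this
  nlinarith [hm, hm']

lemma rmod_eq_self (hh : 0 < h) (hu : u ∈ Set.Ioc 0 h) : rmod h u = u :=
  rmod_unique hh hu ⟨0, by simp⟩

lemma rmod_add_half (hh : 0 < h) (hr : rmod h u ≤ h / 2) :
    rmod h (u + h / 2) = rmod h u + h / 2 := by
  have hrm := rmod_mem hh u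
  obtain ⟨m, hm⟩ := sub_rmod_int h u
  refine rmod_unique hh ⟨by linarith [hrm.1], by linarith⟩ ⟨m, by linarith⟩

lemma rmod_sub_half (hh : 0 < h) (hr : h / 2 < rmod h u) :
    rmod h (u - h / 2) = rmod h u - h / 2 := by
  have hrm := rmod_mem hh u
  obtain ⟨m, hm⟩ := sub_rmod_int h u
  refine rmod_unique hh ⟨by linarith, by linarith [hrm.2]⟩ ⟨m, by push_cast; linarith⟩

lemma rmod_half_le (hh : 0 < h) (hr : rmod h u ≤ h / 2) :
    rmod (h / 2) u = rmod h u := by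
  have hrm := rmod_mem hh u
  obtain ⟨m, hm⟩ := sub_rmod_int h u
  refine rmod_unique (by linarith) ⟨hrm.1, hr⟩ ⟨2 * m, by push_cast; linarith⟩

lemma rmod_half_gt (hh : 0 < h) (hr : h / 2 < rmod h u) :
    rmod (h / 2) u = rmod h u - h / 2 := by
  have hrm := rmod_mem hh u
  obtain ⟨m, hm⟩ := sub_rmod_int h u
  refine rmod_unique (by linarith) ⟨by linarith, by linarith [hrm.2]⟩
    ⟨2 * m + 1, by push_cast; linarith⟩

lemma rmod_measurable (h : ℝ) : Measurable (rmod h) := by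
  unfold rmod
  apply Measurable.sub measurable_id
  apply Measurable.const_mul
  apply Measurable.sub _ measurable_const
  exact (measurable_from_top (f := (Int.cast : ℤ → ℝ))).comp
    (Int.measurable_ceil.comp (measurable_id.div_const h))




lemma sum_range_two_mul (n : ℕ) (a : ℕ → ℝ) :
    ∑ j ∈ Finset.range (2*n), a j = ∑ j ∈ Finset.range n, (a (2*j) + a (2*j+1)) := by
  induction n with
  | zero => simp
  | succ n ih =>
    have : 2 * (n+1) = (2*n) + 1 + 1 := by ring
    rw [this, Finset.sum_range_succ, Finset.sum_range_succ, ih, Finset.sum_range_succ]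
    ring

def gfun (f : ℝ → ℝ) (t : ℝ) (k : ℕ) : ℝ → ℝ :=
  (Set.Ioc (0:ℝ) t).indicator
    (fun u => ((2:ℝ)^k)⁻¹ * ∑ j ∈ Finset.range (2^k), f (rmod (t/2^k) u + j*(t/2^k)))

def Ak (t : ℝ) (k : ℕ) : Set ℝ :=
  {u | u ∈ Set.Ioc (0:ℝ) t ∧ rmod (t/2^k) u ≤ (t/2^k)/2}

variable {f : ℝ → ℝ} {t : ℝ} {k : ℕ}

lemma gfun_mem {u : ℝ} (hu : u ∈ Set.Ioc (0:ℝ) t) :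
    gfun f t k u = ((2:ℝ)^k)⁻¹ * ∑ j ∈ Finset.range (2^k), f (rmod (t/2^k) u + j*(t/2^k)) :=
  Set.indicator_of_mem hu _

lemma gfun_not_mem {u : ℝ} (hu : u ∉ Set.Ioc (0:ℝ) t) : gfun f t k u = 0 :=
  Set.indicator_of_notMem hu _

lemma gfun_measurable (hf : Measurable f) : Measurable (gfun f t k) := by
  apply Measurable.indicator _ measurableSet_Ioc
  apply Measurable.const_mul
  apply Finset.measurable_sum
  intro j _
  exact hf.comp (((rmod_measurable _)).add_const _)

lemma Ak_measurable : MeasurableSet (Ak t k) := by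
  have : Ak t k = Set.Ioc 0 t ∩ (rmod (t/2^k) ⁻¹' Set.Iic ((t/2^k)/2)) := rfl
  rw [this]
  exact measurableSet_Ioc.inter ((rmod_measurable _) measurableSet_Iic)

lemma Ak_hd (ht : 0 < t) : ∀ u ∈ Ak t k, u + (t/2^k)/2 ∉ Ak t k := by
  intro u hu hc
  set h := t/2^k with hh'
  have hh : 0 < h := by positivity
  have h1 : rmod h (u + h/2) = rmod h u + h/2 := rmod_add_half hh hu.2
  have h2 := (rmod_mem hh u).1
  have := hc.2
  rw [h1] at this
  linarith

/-- members of `Ak` can be pushed up by a half step. -/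
lemma Ak_add_half_le (ht : 0 < t) {u : ℝ} (hu : u ∈ Ak t k) : u + (t/2^k)/2 ≤ t := by
  set h := t/2^k with hh'
  have hh : 0 < h := by positivity
  obtain ⟨m, hm⟩ := sub_rmod_int h u
  have hrm := rmod_mem hh u
  have ht2 : t = 2^k * h := by rw [hh']; field_simp
  have hmlt : (m:ℝ) < 2^k := by nlinarith [hrm.1, hu.1.2, hu.1.1]
  have hmZ : m < 2^k := by exact_mod_cast (by push_cast; exact hmlt : (m:ℝ) < ((2^k : ℤ) : ℝ))
  have hmle : (m:ℝ) ≤ 2^k - 1 := by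
    have : m ≤ 2^k - 1 := by omega
    calc (m:ℝ) ≤ ((2^k - 1 : ℤ) : ℝ) := by exact_mod_cast this
    _ = 2^k - 1 := by push_cast; ring
  have := hu.2
  nlinarith [hrm.1]

lemma swapB_Ak_sub (ht : 0 < t) : swapB (Ak t k) ((t/2^k)/2) ⊆ Set.Ioc 0 t := by
  intro u hu
  rw [mem_swapB] at hu
  set h := t/2^k with hh'
  have hh : 0 < h := by positivity
  have h1 := Ak_add_half_le ht hu
  have h2 := hu.1.1
  constructor
  · linarith
  · calc u = (u - h/2) + h/2 := by ring
    _ ≤ t := h1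

/-- the fundamental halving identity. -/
lemma gfun_succ (ht : 0 < t) (k : ℕ) :
    gfun f t (k+1) = fun u => 2⁻¹ *
      (gfun f t k u + gfun f t k (swapMap (Ak t k) ((t/2^k)/2) u)) := by
  funext u
  have hh : 0 < t/2^k := by positivity
  have hhalf : t/2^(k+1) = (t/2^k)/2 := by ring
  have hd : ∀ u ∈ Ak t k, u + (t/2^k)/2 ∉ Ak t k := Ak_hd ht
  by_cases huIoc : u ∈ Set.Ioc (0:ℝ) t
  · by_cases huA : u ∈ Ak t k
    · have hσu : swapMap (Ak t k) ((t/2^k)/2) u = u + (t/2^k)/2 := swapMap_mem_A huA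
      have hσIoc : u + (t/2^k)/2 ∈ Set.Ioc (0:ℝ) t :=
        ⟨by linarith [huIoc.1, hh], Ak_add_half_le ht huA⟩
      have hA2 : rmod (t/2^k) u ≤ (t/2^k)/2 := huA.2
      have hρ : rmod (t/2^k) (u + (t/2^k)/2) = rmod (t/2^k) u + (t/2^k)/2 :=
        rmod_add_half hh hA2
      have hρ2 : rmod ((t/2^k)/2) u = rmod (t/2^k) u := rmod_half_le hh hA2
      rw [hσu, gfun_mem (k := k+1) huIoc, gfun_mem (k := k) huIoc, gfun_mem hσIoc,
        hhalf, hρ, hρ2]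
      have h2 : (2:ℕ)^(k+1) = 2 * 2^k := by ring
      rw [h2, sum_range_two_mul]
      have hsum : ∀ j : ℕ,
          f (rmod (t/2^k) u + ((2*j : ℕ) : ℝ) * ((t/2^k)/2))
            + f (rmod (t/2^k) u + ((2*j+1 : ℕ) : ℝ) * ((t/2^k)/2))
          = f (rmod (t/2^k) u + j * (t/2^k))
            + f ((rmod (t/2^k) u + (t/2^k)/2) + j * (t/2^k)) := by
        intro j
        congr 2 <;> push_cast <;> ring
      rw [Finset.sum_congr rfl (fun j _ => hsum j), Finset.sum_add_distrib]
      push_cast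
      ring
    · have hρmem := rmod_mem hh u
      have hgt : (t/2^k)/2 < rmod (t/2^k) u := by
        by_contra hle
        push_neg at hle
        exact huA ⟨huIoc, hle⟩
      have huB : u ∈ swapB (Ak t k) ((t/2^k)/2) := by
        rw [mem_swapB]
        refine ⟨⟨?_, ?_⟩, ?_⟩
        · obtain ⟨m, hm⟩ := sub_rmod_int (t/2^k) u
          have hm0 : (0:ℝ) ≤ (t/2^k) * m := by
            have hmlt : (-1:ℝ) < (m:ℝ) := by nlinarith [hρmem.2, huIoc.1]
            have h1 : (-1:ℤ) < m := by
              exact_mod_cast (by push_cast; exact hmlt : ((-1:ℤ):ℝ) < (m:ℝ))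
            have h2 : (0:ℤ) ≤ m := by omega
            have h3 : (0:ℝ) ≤ (m:ℝ) := by exact_mod_cast h2
            positivity
          nlinarith [hρmem.1]
        · linarith [huIoc.2, hh]
        · rw [rmod_sub_half hh hgt]; linarith [hρmem.1, hρmem.2]
      have hσu : swapMap (Ak t k) ((t/2^k)/2) u = u - (t/2^k)/2 := swapMap_mem_B hd huB
      have hσIoc : u - (t/2^k)/2 ∈ Set.Ioc (0:ℝ) t := (mem_swapB.1 huB).1
      have hρ : rmod (t/2^k) (u - (t/2^k)/2) = rmod (t/2^k) u - (t/2^k)/2 :=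
        rmod_sub_half hh hgt
      have hρ2 : rmod ((t/2^k)/2) u = rmod (t/2^k) u - (t/2^k)/2 := rmod_half_gt hh hgt
      rw [hσu, gfun_mem (k := k+1) huIoc, gfun_mem (k := k) huIoc, gfun_mem hσIoc,
        hhalf, hρ, hρ2]
      have h2 : (2:ℕ)^(k+1) = 2 * 2^k := by ring
      rw [h2, sum_range_two_mul]
      have hsum : ∀ j : ℕ,
          f ((rmod (t/2^k) u - (t/2^k)/2) + ((2*j : ℕ) : ℝ) * ((t/2^k)/2))
            + f ((rmod (t/2^k) u - (t/2^k)/2) + ((2*j+1 : ℕ) : ℝ) * ((t/2^k)/2))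
          = f ((rmod (t/2^k) u - (t/2^k)/2) + j * (t/2^k))
            + f (rmod (t/2^k) u + j * (t/2^k)) := by
        intro j
        congr 2 <;> push_cast <;> ring
      rw [Finset.sum_congr rfl (fun j _ => hsum j), Finset.sum_add_distrib]
      push_cast
      ring
  · have huA : u ∉ Ak t k := fun hc => huIoc hc.1
    have huB : u ∉ swapB (Ak t k) ((t/2^k)/2) := fun hc => huIoc (swapB_Ak_sub ht hc)
    have hσu : swapMap (Ak t k) ((t/2^k)/2) u = u := swapMap_not_mem huA huB
    rw [gfun_not_mem (k := k+1) huIoc, hσu, gfun_not_mem (k := k) huIoc]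
    ring


section Riemann
variable {f : ℝ → ℝ} {M : ℝ}

lemma bdd_intervalIntegrable (hf : Measurable f) (hfM : ∀ s, |f s| ≤ M) (a b : ℝ) :
    IntervalIntegrable f volume a b := by
  apply IntervalIntegrable.mono_fun' (g := fun _ => M) intervalIntegrable_const
    hf.aestronglyMeasurable
  exact Filter.Eventually.of_forall (fun s => by simpa [Real.norm_eq_abs] using hfM s)

lemma sum_est (hf_anti : Antitone f) (hf_meas : Measurable f)
    (hf0 : ∀ s, 0 ≤ f s) (hfM : ∀ s, f s ≤ M)
    {n : ℕ} (hn : 0 < n) {h ρ : ℝ} (hh : 0 < h) (hρ : ρ ∈ Set.Ioc 0 h) :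
    |(∑ j ∈ Finset.range n, h * f (ρ + j * h)) - ∫ s in (0:ℝ)..((n:ℝ)*h), f s| ≤ h * M := by
  have hM : 0 ≤ M := le_trans (hf0 0) (hfM 0)
  have habs : ∀ s, |f s| ≤ M := fun s => by rw [abs_of_nonneg (hf0 s)]; exact hfM s
  have hint : ∀ a b : ℝ, IntervalIntegrable f volume a b := bdd_intervalIntegrable hf_meas habs
  -- upper bound
  have hup : (∑ j ∈ Finset.range n, h * f (ρ + j * h)) ≤ (∫ s in (0:ℝ)..((n:ℝ)*h), f s) + h * M := by
    have hadj := intervalIntegral.sum_integral_adjacent_intervals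
      (a := fun j : ℕ => ρ - h + j * h) (μ := volume) (n := n) (fun i _ => hint _ _)
    have hterm : ∀ j ∈ Finset.range n, h * f (ρ + j * h)
        ≤ ∫ s in (ρ - h + j*h)..(ρ - h + (j+1:ℕ)*h), f s := by
      intro j _
      have he : ρ - h + ((j+1:ℕ):ℝ)*h = ρ + j*h := by push_cast; ring
      rw [he]
      have hle : ρ - h + j*h ≤ ρ + j*h := by linarith
      have hconst : ∫ s in (ρ - h + j*h)..(ρ + j*h), f (ρ + j*h)
          = h * f (ρ + j*h) := by
        rw [intervalIntegral.integral_const, smul_eq_mul]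
        ring
      rw [← hconst]
      apply intervalIntegral.integral_mono_on hle intervalIntegrable_const (hint _ _)
      intro s hs
      exact hf_anti hs.2
    calc (∑ j ∈ Finset.range n, h * f (ρ + j * h))
        ≤ ∑ j ∈ Finset.range n, ∫ s in (ρ - h + j*h)..(ρ - h + (j+1:ℕ)*h), f s :=
          Finset.sum_le_sum hterm
    _ = ∫ s in (ρ - h + ((0:ℕ):ℝ)*h)..(ρ - h + (n:ℝ)*h), f s := by
          simpa using hadj
    _ ≤ (∫ s in (0:ℝ)..((n:ℝ)*h), f s) + h * M := by
          have hsplit1 : ∫ s in (ρ - h + (0:ℕ)*h)..(ρ - h + (n:ℝ)*h), f s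
              = (∫ s in (ρ - h)..(0:ℝ), f s) + (∫ s in (0:ℝ)..((n:ℝ)*h), f s)
                + ∫ s in ((n:ℝ)*h)..(ρ - h + (n:ℝ)*h), f s := by
            push_cast
            rw [intervalIntegral.integral_add_adjacent_intervals (hint _ _) (hint _ _),
              intervalIntegral.integral_add_adjacent_intervals (hint _ _) (hint _ _)]
            norm_num
          rw [hsplit1]
          have hb1 : (∫ s in (ρ - h)..(0:ℝ), f s) ≤ h * M := by
            have h1 : ρ - h ≤ 0 := by linarith [hρ.1, hρ.2]
            calc (∫ s in (ρ - h)..(0:ℝ), f s) ≤ ∫ s in (ρ - h)..(0:ℝ), M := by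
                  apply intervalIntegral.integral_mono_on h1 (hint _ _) intervalIntegrable_const
                  intro s _; exact hfM s
            _ = (0 - (ρ - h)) * M := by rw [intervalIntegral.integral_const]; simp [smul_eq_mul]
            _ ≤ h * M := by nlinarith [hρ.1, hM]
          have hb2 : (∫ s in ((n:ℝ)*h)..(ρ - h + (n:ℝ)*h), f s) ≤ 0 := by
            have h1 : ρ - h + (n:ℝ)*h ≤ (n:ℝ)*h := by linarith [hρ.2]
            rw [intervalIntegral.integral_symm (ρ - h + (n:ℝ)*h) ((n:ℝ)*h)]
            have : 0 ≤ ∫ s in (ρ - h + (n:ℝ)*h)..((n:ℝ)*h), f s :=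
              intervalIntegral.integral_nonneg h1 (fun s _ => hf0 s)
            linarith
          linarith
  -- lower bound
  have hlo : (∫ s in (0:ℝ)..((n:ℝ)*h), f s) - h * M ≤ ∑ j ∈ Finset.range n, h * f (ρ + j * h) := by
    have hadj := intervalIntegral.sum_integral_adjacent_intervals
      (a := fun j : ℕ => ρ + j * h) (μ := volume) (n := n) (fun i _ => hint _ _)
    have hterm : ∀ j ∈ Finset.range n,
        (∫ s in (ρ + j*h)..(ρ + (j+1:ℕ)*h), f s) ≤ h * f (ρ + j * h) := by
      intro j _
      have he : ρ + ((j+1:ℕ):ℝ)*h = (ρ + j*h) + h := by push_cast; ring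
      rw [he]
      have hle : ρ + j*h ≤ (ρ + j*h) + h := by linarith
      have hconst : ∫ s in (ρ + j*h)..((ρ + j*h) + h), f (ρ + j*h)
          = h * f (ρ + j*h) := by
        rw [intervalIntegral.integral_const]
        simp [smul_eq_mul]
      rw [← hconst]
      apply intervalIntegral.integral_mono_on hle (hint _ _) intervalIntegrable_const
      intro s hs
      exact hf_anti hs.1
    calc (∫ s in (0:ℝ)..((n:ℝ)*h), f s) - h * M
        ≤ ∫ s in ρ..(ρ + (n:ℝ)*h), f s := by
          have hsplit1 : (∫ s in ρ..(ρ + (n:ℝ)*h), f s)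
              = (∫ s in ρ..(0:ℝ), f s) + (∫ s in (0:ℝ)..((n:ℝ)*h), f s)
                + ∫ s in ((n:ℝ)*h)..(ρ + (n:ℝ)*h), f s := by
            rw [intervalIntegral.integral_add_adjacent_intervals (hint _ _) (hint _ _),
              intervalIntegral.integral_add_adjacent_intervals (hint _ _) (hint _ _)]
          rw [hsplit1]
          have hb1 : -(h * M) ≤ (∫ s in ρ..(0:ℝ), f s) := by
            rw [intervalIntegral.integral_symm (0:ℝ) ρ]
            have hcalc : (∫ s in (0:ℝ)..ρ, f s) ≤ h * M := by
              calc (∫ s in (0:ℝ)..ρ, f s) ≤ ∫ s in (0:ℝ)..ρ, M := by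
                    apply intervalIntegral.integral_mono_on hρ.1.le (hint _ _)
                      intervalIntegrable_const
                    intro s _; exact hfM s
              _ = (ρ - 0) * M := by rw [intervalIntegral.integral_const]; simp [smul_eq_mul]
              _ ≤ h * M := by nlinarith [hρ.2, hM]
            linarith
          have hb2 : 0 ≤ (∫ s in ((n:ℝ)*h)..(ρ + (n:ℝ)*h), f s) := by
            apply intervalIntegral.integral_nonneg (by linarith [hρ.1]) (fun s _ => hf0 s)
          linarith
    _ = ∑ j ∈ Finset.range n, ∫ s in (ρ + j*h)..(ρ + (j+1:ℕ)*h), f s := by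
          rw [hadj]
          norm_num
    _ ≤ ∑ j ∈ Finset.range n, h * f (ρ + j * h) := Finset.sum_le_sum hterm
  rw [abs_le]
  constructor <;> linarith

/-- Riemann estimate for `gfun`. -/
lemma gfun_riemann (hf_anti : Antitone f) (hf_meas : Measurable f)
    (hf0 : ∀ s, 0 ≤ f s) (hfM : ∀ s, f s ≤ M) {t : ℝ} (ht : 0 < t) (k : ℕ)
    {u : ℝ} (hu : u ∈ Set.Ioc (0:ℝ) t) :
    |gfun f t k u - (∫ s in (0:ℝ)..t, f s)/t| ≤ M / 2^k := by
  have hh : 0 < t/2^k := by positivity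
  have hρ := rmod_mem hh u
  have hkey := sum_est hf_anti hf_meas hf0 hfM (n := 2^k) (pow_pos two_pos k) hh hρ
  have hnh : ((2^k : ℕ):ℝ) * (t/2^k) = t := by push_cast; field_simp
  rw [hnh] at hkey
  rw [gfun_mem hu]
  have hexp : ((2:ℝ)^k)⁻¹ * (∑ j ∈ Finset.range (2^k), f (rmod (t/2^k) u + j*(t/2^k)))
      - (∫ s in (0:ℝ)..t, f s)/t
      = (1/t) * ((∑ j ∈ Finset.range (2^k), (t/2^k) * f (rmod (t/2^k) u + j*(t/2^k)))
        - ∫ s in (0:ℝ)..t, f s) := by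
    rw [Finset.mul_sum, mul_sub, Finset.mul_sum]
    congr 1
    · apply Finset.sum_congr rfl
      intro j _
      field_simp
    · ring
  rw [hexp, abs_mul, abs_of_pos (by positivity : (0:ℝ) < 1/t)]
  calc (1/t) * |(∑ j ∈ Finset.range (2^k), (t/2^k) * f (rmod (t/2^k) u + j*(t/2^k)))
        - ∫ s in (0:ℝ)..t, f s| ≤ (1/t) * ((t/2^k) * M) := by
        apply mul_le_mul_of_nonneg_left hkey (by positivity)
  _ = M / 2^k := by field_simp

end Riemann

section Equi
variable {x : ℝ → ℝ}

/-- the indicator of `rearr` on `(0,1]` is equimeasurable with `x`. -/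
lemma distr_indicator_rearr (hx : Measurable x) {τ : ℝ} (hτ : 0 < τ) :
    distr ((Set.Ioc (0:ℝ) 1).indicator (rearr x)) τ = distr x τ := by
  have hfin : distr x τ ≠ ⊤ := (distr_lt_top x τ).ne
  have hle1 : (distr x τ).toReal ≤ 1 := by
    have := distr_le_one x τ
    rw [← ENNReal.toReal_le_toReal hfin (by norm_num)] at this
    simpa using this
  have hset : {s ∈ Set.Icc (0:ℝ) 1 | τ < |((Set.Ioc (0:ℝ) 1).indicator (rearr x)) s|}
      = Set.Ioo 0 ((distr x τ).toReal) := by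
    ext s
    simp only [Set.mem_setOf_eq, Set.mem_Ioo, Set.mem_Icc]
    constructor
    · rintro ⟨⟨hs0, hs1⟩, hlt⟩
      by_cases hmem : s ∈ Set.Ioc (0:ℝ) 1
      · rw [Set.indicator_of_mem hmem, abs_of_nonneg (rearr_nonneg x s)] at hlt
        have := (lt_rearr_iff hx hτ.le hmem.1).1 hlt
        rw [ENNReal.ofReal_lt_iff_lt_toReal hmem.1.le hfin] at this
        exact ⟨hmem.1, this⟩
      · rw [Set.indicator_of_notMem hmem] at hlt
        simp at hlt
        linarith
    · rintro ⟨hs0, hsd⟩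
      have hs1 : s ≤ 1 := le_trans hsd.le hle1
      have hmem : s ∈ Set.Ioc (0:ℝ) 1 := ⟨hs0, hs1⟩
      refine ⟨⟨hs0.le, hs1⟩, ?_⟩
      rw [Set.indicator_of_mem hmem, abs_of_nonneg (rearr_nonneg x s)]
      rw [lt_rearr_iff hx hτ.le hs0, ENNReal.ofReal_lt_iff_lt_toReal hs0.le hfin]
      exact hsd
  show volume {s ∈ Set.Icc (0:ℝ) 1 | τ < |((Set.Ioc (0:ℝ) 1).indicator (rearr x)) s|} = distr x τ
  rw [hset, Real.volume_Ioo, sub_zero, ENNReal.ofReal_toReal hfin]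

end Equi

section NormChain
variable {f : ℝ → ℝ} {t : ℝ} {k : ℕ}

/-- composing a measurable function with the swap map leaves `distr` unchanged. -/
lemma distr_comp_swap {g : ℝ → ℝ} (hg : Measurable g) {A : Set ℝ} {c : ℝ}
    (hA : MeasurableSet A) (hd : ∀ u ∈ A, u + c ∉ A)
    (hsub : A ∪ swapB A c ⊆ Set.Icc (0:ℝ) 1) (τ : ℝ) :
    distr (fun s => g (swapMap A c s)) τ = distr g τ := by
  set σ := swapMap A c with hσ'
  set T := {s ∈ Set.Icc (0:ℝ) 1 | τ < |g s|} with hT'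
  have hTmeas : MeasurableSet T := distr_set_meas hg τ
  have hIcc : ∀ u : ℝ, u ∈ Set.Icc (0:ℝ) 1 ↔ σ u ∈ Set.Icc (0:ℝ) 1 := by
    intro u
    by_cases hu : u ∈ A ∪ swapB A c
    · have h1 : u ∈ Set.Icc (0:ℝ) 1 := hsub hu
      have h2 : σ u ∈ Set.Icc (0:ℝ) 1 := hsub (swapMap_maps hd hu)
      exact ⟨fun _ => h2, fun _ => h1⟩
    · rw [Set.mem_union] at hu
      push_neg at hu
      rw [hσ', swapMap_not_mem hu.1 hu.2]
  have hpre : {s ∈ Set.Icc (0:ℝ) 1 | τ < |g (σ s)|} = σ ⁻¹' T := by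
    ext u
    simp only [Set.mem_setOf_eq, Set.mem_preimage, hT']
    constructor
    · rintro ⟨h1, h2⟩
      exact ⟨(hIcc u).1 h1, h2⟩
    · rintro ⟨h1, h2⟩
      exact ⟨(hIcc u).2 h1, h2⟩
  show volume {s ∈ Set.Icc (0:ℝ) 1 | τ < |g (σ s)|} = volume T
  rw [hpre]
  exact swapMap_preimage_volume hA hd hTmeas

/-- the norms of the dyadic averages are dominated by the norm of `x`. -/
lemma gfun_norm_le (NE : SymmetricNorm) {x : ℝ → ℝ} (hx : Measurable x)
    {M : ℝ} (hM : 0 ≤ M) (hb : ∀ s, |x s| ≤ M) (ht : t ∈ Set.Ioc (0:ℝ) 1) (k : ℕ) :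
    NE.N (gfun (rearr x) t k) ≤ NE.N x := by
  have hf_anti : Antitone (rearr x) := rearr_anti_of_bound hM hb
  have hf_meas : Measurable (rearr x) := hf_anti.measurable
  have hf0 : ∀ s, 0 ≤ rearr x s := rearr_nonneg x
  induction k with
  | zero =>
    -- gfun _ t 0 = indicator (Ioc 0 t) (rearr x)
    have h0 : gfun (rearr x) t 0 = (Set.Ioc (0:ℝ) t).indicator (rearr x) := by
      funext u
      by_cases hu : u ∈ Set.Ioc (0:ℝ) t
      · rw [gfun_mem hu, Set.indicator_of_mem hu]
        simp only [pow_zero, div_one, Finset.range_one, Finset.sum_singleton, Nat.cast_zero,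
          inv_one, one_mul, zero_mul, add_zero]
        rw [rmod_eq_self ht.1 hu]
      · rw [gfun_not_mem hu, Set.indicator_of_notMem hu]
    rw [h0]
    calc NE.N ((Set.Ioc (0:ℝ) t).indicator (rearr x))
        ≤ NE.N ((Set.Ioc (0:ℝ) 1).indicator (rearr x)) := by
          apply NE.mono
          apply Filter.Eventually.of_forall
          intro s
          by_cases hs : s ∈ Set.Ioc (0:ℝ) t
          · rw [Set.indicator_of_mem hs,
              Set.indicator_of_mem (Set.Ioc_subset_Ioc_right ht.2 hs)]
          · rw [Set.indicator_of_notMem hs]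
            simp only [abs_zero]
            exact abs_nonneg _
    _ = NE.N x := by
          apply NE.symm _ _ (hf_meas.indicator measurableSet_Ioc) hx
          intro τ hτ
          exact distr_indicator_rearr hx hτ
  | succ k ih =>
    have hsucc := gfun_succ (f := rearr x) ht.1 k
    have hAsub : Ak t k ∪ swapB (Ak t k) ((t/2^k)/2) ⊆ Set.Icc (0:ℝ) 1 := by
      intro u hu
      have : u ∈ Set.Ioc (0:ℝ) t := by
        rcases hu with hu | hu
        · exact hu.1
        · exact swapB_Ak_sub ht.1 hu
      exact ⟨this.1.le, le_trans this.2 ht.2⟩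
    have hgmeas : Measurable (gfun (rearr x) t k) := gfun_measurable hf_meas
    have hcomp : NE.N (fun u => gfun (rearr x) t k (swapMap (Ak t k) ((t/2^k)/2) u))
        = NE.N (gfun (rearr x) t k) := by
      apply NE.symm _ _ (hgmeas.comp (swapMap_measurable Ak_measurable)) hgmeas
      intro τ hτ
      exact distr_comp_swap hgmeas Ak_measurable (Ak_hd ht.1) hAsub τ
    calc NE.N (gfun (rearr x) t (k+1))
        = ENNReal.ofReal |2⁻¹| * NE.N (fun u => gfun (rearr x) t k u
            + gfun (rearr x) t k (swapMap (Ak t k) ((t/2^k)/2) u)) := by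
          rw [hsucc]
          exact NE.smul_eq 2⁻¹ _
    _ ≤ ENNReal.ofReal |2⁻¹| * (NE.N (gfun (rearr x) t k)
          + NE.N (fun u => gfun (rearr x) t k (swapMap (Ak t k) ((t/2^k)/2) u))) := by
          apply mul_le_mul_right
          exact NE.add_le (gfun (rearr x) t k) _
    _ = NE.N (gfun (rearr x) t k) := by
          rw [hcomp, ← two_mul, ← mul_assoc]
          have h1 : ENNReal.ofReal |(2:ℝ)⁻¹| * 2 = 1 := by
            rw [abs_of_pos (by norm_num : (0:ℝ) < 2⁻¹)]
            rw [show (2:ℝ≥0∞) = ENNReal.ofReal 2 by norm_num]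
            rw [← ENNReal.ofReal_mul (by norm_num)]
            norm_num
          rw [h1, one_mul]
    _ ≤ NE.N x := ih

end NormChain

/-- Core inequality, bounded case: `(φ(t)/t)·∫₀ᵗ x* ≤ ‖x‖_E`. -/
lemma coreK (NE : SymmetricNorm) (φ : ℝ → ℝ)
    (hfund : ∀ t ∈ Set.Ioc (0:ℝ) 1,
      NE.N ((Set.Ioo (0:ℝ) t).indicator (fun _ => (1:ℝ))) = ENNReal.ofReal (φ t))
    {x : ℝ → ℝ} (hx : Measurable x) {M : ℝ} (hM : 0 ≤ M) (hb : ∀ s, |x s| ≤ M)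
    {t : ℝ} (ht : t ∈ Set.Ioc (0:ℝ) 1) (hφt : 0 < φ t) :
    ENNReal.ofReal (φ t / t) * ∫⁻ s in Set.Ioc (0:ℝ) t, ENNReal.ofReal (rearr x s)
      ≤ NE.N x := by
  have hf_anti : Antitone (rearr x) := rearr_anti_of_bound hM hb
  have hf_meas : Measurable (rearr x) := hf_anti.measurable
  have hf0 : ∀ s, 0 ≤ rearr x s := rearr_nonneg x
  have hfM : ∀ s, rearr x s ≤ M := rearr_le_of_bound hM hb
  have habs : ∀ s, |rearr x s| ≤ M := fun s => by rw [abs_of_nonneg (hf0 s)]; exact hfM s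
  set Iℝ := ∫ s in (0:ℝ)..t, rearr x s with hIdef
  have hI0 : 0 ≤ Iℝ := intervalIntegral.integral_nonneg ht.1.le (fun s _ => hf0 s)
  set c' := Iℝ / t with hc'def
  have hc'0 : 0 ≤ c' := div_nonneg hI0 ht.1.le
  -- lintegral = ofReal of interval integral
  have hIntOn : MeasureTheory.IntegrableOn (rearr x) (Set.Ioc 0 t) volume := by
    have h1 := bdd_intervalIntegrable hf_meas habs 0 t
    rw [intervalIntegrable_iff, Set.uIoc_of_le ht.1.le] at h1
    exact h1
  have hlint : (∫⁻ s in Set.Ioc (0:ℝ) t, ENNReal.ofReal (rearr x s)) = ENNReal.ofReal Iℝ := by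
    rw [hIdef, intervalIntegral.integral_of_le ht.1.le]
    exact (MeasureTheory.ofReal_integral_eq_lintegral_ofReal hIntOn
      (Filter.Eventually.of_forall (fun s => hf0 s))).symm
  -- the key estimate for every k
  have hkey : ∀ k : ℕ, ENNReal.ofReal c' * ENNReal.ofReal (φ t)
      ≤ NE.N x + ENNReal.ofReal (M/2^k) * ENNReal.ofReal (φ t) := by
    intro k
    set χ := (Set.Ioo (0:ℝ) t).indicator (fun _ => (1:ℝ)) with hχdef
    set g := gfun (rearr x) t k with hgdef
    have hcχ : NE.N (fun u => c' * χ u) = ENNReal.ofReal c' * ENNReal.ofReal (φ t) := by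
      rw [NE.smul_eq c' χ, hfund t ht, abs_of_nonneg hc'0]
    have hMχ : NE.N (fun u => (M/2^k) * χ u)
        = ENNReal.ofReal (M/2^k) * ENNReal.ofReal (φ t) := by
      rw [NE.smul_eq _ χ, hfund t ht, abs_of_nonneg (by positivity : (0:ℝ) ≤ M/2^k)]
    set y := fun u => c' * χ u - g u with hydef
    have hsum : (fun u => c' * χ u) = g + y := by
      funext u
      simp only [hydef, Pi.add_apply]
      ring
    have hNy : NE.N y ≤ NE.N (fun u => (M/2^k) * χ u) := by
      apply NE.mono
      have htnull : mu01 {t} = 0 := by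
        rw [mu01, MeasureTheory.Measure.restrict_apply (measurableSet_singleton t)]
        exact measure_mono_null Set.inter_subset_left Real.volume_singleton
      rw [MeasureTheory.ae_iff]
      apply measure_mono_null _ htnull
      intro s hs
      simp only [Set.mem_setOf_eq, not_le] at hs
      by_contra hst
      simp only [Set.mem_singleton_iff] at hst
      -- s ≠ t; show the inequality does hold, contradiction
      apply absurd hs
      push_neg
      by_cases hsI : s ∈ Set.Ioo (0:ℝ) t
      · have hsIoc : s ∈ Set.Ioc (0:ℝ) t := ⟨hsI.1, hsI.2.le⟩
        have hr := gfun_riemann hf_anti hf_meas hf0 hfM ht.1 k hsIoc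
        simp only [hydef, hχdef, Set.indicator_of_mem hsI, mul_one]
        rw [abs_sub_comm] at hr
        calc |c' - g s| = |c' * 1 - g s| := by norm_num
        _ ≤ |M/2^k| := by
            rw [abs_of_nonneg (by positivity : (0:ℝ) ≤ M/2^k)]
            simpa [hc'def] using hr
      · have hsIoc : s ∉ Set.Ioc (0:ℝ) t := by
          intro hc
          rcases lt_or_eq_of_le hc.2 with h | h
          · exact hsI ⟨hc.1, h⟩
          · exact hst h
        simp only [hydef, hχdef, Set.indicator_of_notMem hsI, mul_zero,
          hgdef, gfun_not_mem hsIoc]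
        simp
    calc ENNReal.ofReal c' * ENNReal.ofReal (φ t) = NE.N (fun u => c' * χ u) := hcχ.symm
    _ = NE.N (g + y) := by rw [hsum]
    _ ≤ NE.N g + NE.N y := NE.add_le g y
    _ ≤ NE.N x + NE.N (fun u => (M/2^k) * χ u) :=
        add_le_add (gfun_norm_le NE hx hM hb ht k) hNy
    _ = NE.N x + ENNReal.ofReal (M/2^k) * ENNReal.ofReal (φ t) := by rw [hMχ]
  -- pass to the limit
  have hlimit : ENNReal.ofReal c' * ENNReal.ofReal (φ t) ≤ NE.N x := by
    apply ENNReal.le_of_forall_pos_le_add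
    intro ε hε _
    have hεR : (0:ℝ) < (ε:ℝ) := hε
    obtain ⟨k, hk⟩ := pow_unbounded_of_one_lt (M * φ t / (ε:ℝ)) (by norm_num : (1:ℝ) < 2)
    have hkR : M * φ t / 2^k ≤ (ε:ℝ) := by
      rw [div_lt_iff₀ hεR] at hk
      rw [div_le_iff₀ (by positivity : (0:ℝ) < 2^k)]
      nlinarith
    calc ENNReal.ofReal c' * ENNReal.ofReal (φ t)
        ≤ NE.N x + ENNReal.ofReal (M/2^k) * ENNReal.ofReal (φ t) := hkey k
    _ ≤ NE.N x + (ε : ℝ≥0∞) := by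
        apply add_le_add le_rfl
        rw [← ENNReal.ofReal_mul (by positivity : (0:ℝ) ≤ M/2^k)]
        calc ENNReal.ofReal (M/2^k * φ t) = ENNReal.ofReal (M * φ t / 2^k) := by ring_nf
        _ ≤ ENNReal.ofReal (ε:ℝ) := ENNReal.ofReal_le_ofReal hkR
        _ = (ε : ℝ≥0∞) := ENNReal.ofReal_coe_nnreal
  -- convert
  rw [hlint, ← ENNReal.ofReal_mul (div_nonneg hφt.le ht.1.le)]
  have heq : φ t / t * Iℝ = c' * φ t := by
    rw [hc'def]
    field_simp
  rw [heq, ENNReal.ofReal_mul hc'0]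
  exact hlimit

/-- Full key inequality: for measurable `x` and `t ∈ (0,1]`,
`(φ(t)/t)·∫₀ᵗ x* ≤ ‖x‖_E`. -/
lemma lemmaK (NE : SymmetricNorm) (φ : ℝ → ℝ)
    (hfund : ∀ t ∈ Set.Ioc (0:ℝ) 1,
      NE.N ((Set.Ioo (0:ℝ) t).indicator (fun _ => (1:ℝ))) = ENNReal.ofReal (φ t))
    {x : ℝ → ℝ} (hx : Measurable x)
    {t : ℝ} (ht : t ∈ Set.Ioc (0:ℝ) 1) (hφt : 0 < φ t) :
    ENNReal.ofReal (φ t / t) * ∫⁻ s in Set.Ioc (0:ℝ) t, ENNReal.ofReal (rearr x s)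
      ≤ NE.N x := by
  set xn : ℕ → ℝ → ℝ := fun n s => min |x s| n with hxn
  have hxn_meas : ∀ n, Measurable (xn n) := fun n => hx.abs.min measurable_const
  have hxn_nonneg : ∀ n s, 0 ≤ xn n s := fun n s => le_min (abs_nonneg _) (Nat.cast_nonneg n)
  have hxn_bound : ∀ n s, |xn n s| ≤ (n:ℝ) := fun n s => by
    rw [abs_of_nonneg (hxn_nonneg n s)]; exact min_le_right _ _
  have hxn_le : ∀ n s, |xn n s| ≤ |x s| := fun n s => by
    rw [abs_of_nonneg (hxn_nonneg n s)]; exact min_le_left _ _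
  -- per-truncation bound
  have hcore : ∀ n : ℕ,
      ENNReal.ofReal (φ t / t) * ∫⁻ s in Set.Ioc (0:ℝ) t, ENNReal.ofReal (rearr (xn n) s)
        ≤ NE.N x := by
    intro n
    calc ENNReal.ofReal (φ t / t) * ∫⁻ s in Set.Ioc (0:ℝ) t, ENNReal.ofReal (rearr (xn n) s)
        ≤ NE.N (xn n) := coreK NE φ hfund (hxn_meas n) (Nat.cast_nonneg n) (hxn_bound n) ht hφt
    _ ≤ NE.N x := NE.mono _ _ (Filter.Eventually.of_forall (fun s => hxn_le n s))
  -- monotone convergence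
  have hsup : (∫⁻ s in Set.Ioc (0:ℝ) t, ENNReal.ofReal (rearr x s))
      = ⨆ n, ∫⁻ s in Set.Ioc (0:ℝ) t, ENNReal.ofReal (rearr (xn n) s) := by
    have haemeas : ∀ n : ℕ, AEMeasurable (fun s => ENNReal.ofReal (rearr (xn n) s))
        (volume.restrict (Set.Ioc (0:ℝ) t)) := by
      intro n
      exact (ENNReal.measurable_ofReal.comp
        (rearr_measurable_of_bound (Nat.cast_nonneg n) (hxn_bound n))).aemeasurable
    have haemono : ∀ᵐ s ∂(volume.restrict (Set.Ioc (0:ℝ) t)),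
        Monotone (fun n => ENNReal.ofReal (rearr (xn n) s)) := by
      filter_upwards [MeasureTheory.self_mem_ae_restrict
        (measurableSet_Ioc : MeasurableSet (Set.Ioc (0:ℝ) t))] with s hs
      intro m n hmn
      simp only [hxn]
      rw [rearr_trunc hx (Nat.cast_nonneg m) hs.1, rearr_trunc hx (Nat.cast_nonneg n) hs.1]
      apply ENNReal.ofReal_le_ofReal
      exact min_le_min (le_refl _) (Nat.cast_le.2 hmn)
    have hlim : ∀ᵐ s ∂(volume.restrict (Set.Ioc (0:ℝ) t)),
        (⨆ n, ENNReal.ofReal (rearr (xn n) s)) = ENNReal.ofReal (rearr x s) := by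
      filter_upwards [MeasureTheory.self_mem_ae_restrict
        (measurableSet_Ioc : MeasurableSet (Set.Ioc (0:ℝ) t))] with s hs
      obtain ⟨n, hn⟩ := exists_nat_ge (rearr x s)
      apply le_antisymm
      · apply iSup_le
        intro m
        simp only [hxn]
        rw [rearr_trunc hx (Nat.cast_nonneg m) hs.1]
        exact ENNReal.ofReal_le_ofReal (min_le_left _ _)
      · refine le_iSup_of_le n (le_of_eq ?_)
        simp only [hxn]
        rw [rearr_trunc hx (Nat.cast_nonneg n) hs.1, min_eq_left hn]
    calc (∫⁻ s in Set.Ioc (0:ℝ) t, ENNReal.ofReal (rearr x s))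
        = ∫⁻ s in Set.Ioc (0:ℝ) t, ⨆ n, ENNReal.ofReal (rearr (xn n) s) :=
          (MeasureTheory.lintegral_congr_ae hlim).symm
    _ = ⨆ n, ∫⁻ s in Set.Ioc (0:ℝ) t, ENNReal.ofReal (rearr (xn n) s) :=
          MeasureTheory.lintegral_iSup' haemeas haemono
  rw [hsup, ENNReal.mul_iSup]
  exact iSup_le hcore

/-- for a positive concave function on `(0,1]`, `t ↦ ψ(t)/t` is antitone. -/
lemma concave_div_anti {ψ : ℝ → ℝ} (hconc : ConcaveOn ℝ (Set.Ioc (0:ℝ) 1) ψ)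
    (hpos : ∀ t ∈ Set.Ioc (0:ℝ) 1, 0 < ψ t)
    {a b : ℝ} (ha : 0 < a) (hab : a ≤ b) (hb1 : b ≤ 1) : ψ b / b ≤ ψ a / a := by
  rcases eq_or_lt_of_le hab with rfl | hlt
  · exact le_refl _
  have hb0 : 0 < b := lt_trans ha hlt
  have hkey : (a / b) * ψ b ≤ ψ a := by
    have hev : ∀ᶠ ε in nhdsWithin (0:ℝ) (Set.Ioi 0),
        ((a - ε) / (b - ε)) * ψ b ≤ ψ a := by
      filter_upwards [Ioo_mem_nhdsGT_of_mem (by simp [ha] : (0:ℝ) ∈ Set.Ico 0 a)] with ε hε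
      have hε0 : 0 < ε := hε.1
      have hεa : ε < a := hε.2
      have hmemb : b ∈ Set.Ioc (0:ℝ) 1 := ⟨hb0, hb1⟩
      have hmemε : ε ∈ Set.Ioc (0:ℝ) 1 := ⟨hε0, by linarith⟩
      set lam := (a - ε) / (b - ε) with hlam
      have hlam0 : 0 ≤ lam := by
        apply div_nonneg <;> linarith
      have hlam1 : lam ≤ 1 := by
        rw [hlam, div_le_one (by linarith)]
        linarith
      have hne : b - ε ≠ 0 := by intro hc; nlinarith
      have h0 : lam * (b - ε) = a - ε := by rw [hlam]; field_simp
      have hcomb : lam * b + (1 - lam) * ε = a := by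
        calc lam * b + (1 - lam) * ε = lam * (b - ε) + ε := by ring
        _ = a := by rw [h0]; ring
      have := hconc.2 hmemb hmemε hlam0 (by linarith : (0:ℝ) ≤ 1 - lam) (by ring)
      rw [smul_eq_mul, smul_eq_mul, smul_eq_mul, smul_eq_mul] at this
      rw [hcomb] at this
      have hψε : 0 < ψ ε := hpos ε hmemε
      nlinarith
    have hcont : Filter.Tendsto (fun ε : ℝ => ((a - ε) / (b - ε)) * ψ b)
        (nhdsWithin 0 (Set.Ioi 0)) (nhds ((a / b) * ψ b)) := by
      have hc : ContinuousAt (fun ε : ℝ => ((a - ε) / (b - ε)) * ψ b) 0 := by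
        apply ContinuousAt.mul _ continuousAt_const
        apply ContinuousAt.div
        · fun_prop
        · fun_prop
        · simpa using hb0.ne'
      have := hc.tendsto
      simp only [sub_zero] at this
      exact this.mono_left nhdsWithin_le_nhds
    exact le_of_tendsto hcont hev
  rw [div_le_div_iff₀ hb0 ha]
  have h1 : (a/b) * ψ b * b = ψ b * a := by field_simp
  nlinarith [hkey]

/-- bound `ψ ≤ C·φ` on `(0,1]` from condition (A). -/
lemma psi_le_C_phi {φ ψ : ℝ → ℝ}
    (hφm : MonotoneOn φ (Set.Ioc (0:ℝ) 1)) (hφpos : ∀ t ∈ Set.Ioc (0:ℝ) 1, 0 < φ t)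
    (hψm : MonotoneOn ψ (Set.Ioc (0:ℝ) 1)) (hψpos : ∀ t ∈ Set.Ioc (0:ℝ) 1, 0 < ψ t)
    (hA : Filter.Tendsto (fun t => ψ t / φ t) (nhdsWithin 0 (Set.Ioi 0)) (nhds 0)) :
    ∃ C : ℝ, 1 ≤ C ∧ ∀ t ∈ Set.Ioc (0:ℝ) 1, ψ t ≤ C * φ t := by
  obtain ⟨δ, hδ0, hδ⟩ := Metric.tendsto_nhdsWithin_nhds.mp hA 1 one_pos
  set t₀ := min δ 1 / 2 with ht₀def
  have ht₀mem : t₀ ∈ Set.Ioc (0:ℝ) 1 := by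
    constructor
    · positivity
    · have : min δ 1 ≤ 1 := min_le_right _ _
      linarith
  have hφt₀ : 0 < φ t₀ := hφpos t₀ ht₀mem
  refine ⟨max 1 (ψ 1 / φ t₀), le_max_left _ _, ?_⟩
  intro t htmem
  have hφt : 0 < φ t := hφpos t htmem
  by_cases htδ : t < δ
  · have hsmall := hδ htmem.1 (by rw [Real.dist_eq, sub_zero, abs_of_pos htmem.1]; exact htδ)
    rw [Real.dist_eq, sub_zero] at hsmall
    have h2 : ψ t / φ t < 1 := lt_of_abs_lt hsmall
    have h3 : ψ t < φ t := by
      rw [div_lt_one hφt] at h2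
      exact h2
    calc ψ t ≤ 1 * φ t := by linarith
    _ ≤ max 1 (ψ 1 / φ t₀) * φ t := by
        apply mul_le_mul_of_nonneg_right (le_max_left _ _) hφt.le
  · push_neg at htδ
    have ht₀t : t₀ ≤ t := by
      have h1 : min δ 1 ≤ δ := min_le_left _ _
      have h2 : 0 < min δ 1 := lt_min hδ0 one_pos
      linarith
    have h1mem : (1:ℝ) ∈ Set.Ioc (0:ℝ) 1 := ⟨one_pos, le_refl 1⟩
    calc ψ t ≤ ψ 1 := hψm htmem h1mem htmem.2
    _ = (ψ 1 / φ t₀) * φ t₀ := by field_simp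
    _ ≤ (ψ 1 / φ t₀) * φ t := by
        apply mul_le_mul_of_nonneg_left (hφm ht₀mem htmem ht₀t)
        exact div_nonneg (hψpos 1 h1mem).le hφt₀.le
    _ ≤ max 1 (ψ 1 / φ t₀) * φ t :=
        mul_le_mul_of_nonneg_right (le_max_right _ _) hφt.le


/-- **Theorem 2.** If `φ, ψ ∈ G` satisfy condition (A): `lim_{t→0+} ψ(t)/φ(t) = 0`, and `E` is a
symmetric space with fundamental function `φ`, then `E ⊆ M(ψ̃)` boundedly and the identity
inclusion `I : E → M(ψ̃)` is disjointly strictly singular. -/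
theorem symmetric_into_marcinkiewicz_DSS
    (φ ψ : ℝ → ℝ)
    (hφm : MonotoneOn φ (Set.Ioc (0:ℝ) 1)) (hφpos : ∀ t ∈ Set.Ioc (0:ℝ) 1, 0 < φ t)
    (hφconc : ConcaveOn ℝ (Set.Ioc (0:ℝ) 1) φ)
    (hψm : MonotoneOn ψ (Set.Ioc (0:ℝ) 1)) (hψpos : ∀ t ∈ Set.Ioc (0:ℝ) 1, 0 < ψ t)
    (hψconc : ConcaveOn ℝ (Set.Ioc (0:ℝ) 1) ψ)
    (hA : Filter.Tendsto (fun t => ψ t / φ t) (nhdsWithin 0 (Set.Ioi 0)) (nhds 0))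
    (NE : SymmetricNorm)
    (hfund : ∀ t ∈ Set.Ioc (0:ℝ) 1,
      NE.N ((Set.Ioo (0:ℝ) t).indicator (fun _ => (1:ℝ))) = ENNReal.ofReal (φ t)) :
    (∃ C : ℝ, 0 < C ∧ ∀ x : ℝ → ℝ, Measurable x →
      marcNorm ψ x ≤ ENNReal.ofReal C * NE.N x) ∧
    ¬ DSSFails NE.N (marcNorm ψ) := by
  obtain ⟨C, hC1, hCle⟩ := psi_le_C_phi hφm hφpos hψm hψpos hA
  constructor
  · -- Part 1 : bounded inclusion
    refine ⟨C, lt_of_lt_of_le one_pos hC1, ?_⟩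
    intro x hx
    rw [marcNorm]
    apply iSup₂_le
    intro t ht
    have hφt := hφpos t ht
    have h1 : ψ t / t ≤ C * (φ t / t) := by
      rw [← mul_div_assoc]
      exact (div_le_div_iff_of_pos_right ht.1).mpr (hCle t ht)
    calc ENNReal.ofReal (ψ t / t) * ∫⁻ s in Set.Ioc (0:ℝ) t, ENNReal.ofReal (rearr x s)
        ≤ ENNReal.ofReal (C * (φ t / t)) * ∫⁻ s in Set.Ioc (0:ℝ) t, ENNReal.ofReal (rearr x s) :=
          mul_le_mul_left (ENNReal.ofReal_le_ofReal h1) _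
    _ = ENNReal.ofReal C *
          (ENNReal.ofReal (φ t / t) * ∫⁻ s in Set.Ioc (0:ℝ) t, ENNReal.ofReal (rearr x s)) := by
          rw [ENNReal.ofReal_mul (by linarith : (0:ℝ) ≤ C), mul_assoc]
    _ ≤ ENNReal.ofReal C * NE.N x :=
          mul_le_mul_right (lemmaK NE φ hfund hx ht hφt) _
  · -- Part 2 : disjoint strict singularity
    rintro ⟨xs, B, hB, hmeas, hdisj, hpos, hspan⟩
    have hη : 0 < 1/(2*B) := by positivity
    obtain ⟨δ, hδ0, hδ⟩ := Metric.tendsto_nhdsWithin_nhds.mp hA _ hη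
    set S : ℕ → Set ℝ := fun n => {s ∈ Set.Icc (0:ℝ) 1 | xs n s ≠ 0} with hSdef
    have hSmeas : ∀ n, MeasurableSet (S n) := by
      intro n
      have h : S n = Set.Icc (0:ℝ) 1 ∩ (xs n) ⁻¹' ({0}ᶜ) := by
        ext s
        simp [hSdef]
      rw [h]
      exact measurableSet_Icc.inter ((hmeas n) (measurableSet_singleton 0).compl)
    have hSsub : ∀ n, S n ⊆ Set.Icc (0:ℝ) 1 := fun n s hs => hs.1
    have hAED : ∀ n m, n ≠ m → MeasureTheory.AEDisjoint volume (S n) (S m) := by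
      intro n m hnm
      have h1 := hdisj n m hnm
      have hbad : MeasurableSet {a : ℝ | ¬ xs n a * xs m a = 0} := by
        have he : {a : ℝ | ¬ xs n a * xs m a = 0}
            = (fun a => xs n a * xs m a) ⁻¹' ({0}ᶜ) := rfl
        rw [he]
        exact ((hmeas n).mul (hmeas m)) (measurableSet_singleton 0).compl
      rw [MeasureTheory.ae_iff, mu01, MeasureTheory.Measure.restrict_apply hbad] at h1
      apply measure_mono_null _ h1
      intro s hs
      exact ⟨mul_ne_zero hs.1.2 hs.2.2, hs.1.1⟩
    have hsum : ∀ N : ℕ, ∑ n ∈ Finset.range N, volume (S n) ≤ 1 := by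
      intro N
      have hpair : (↑(Finset.range N) : Set ℕ).Pairwise (Function.onFun (MeasureTheory.AEDisjoint volume) S) :=
        fun i _ j _ hij => hAED i j hij
      rw [← MeasureTheory.measure_biUnion_finset₀ hpair
        (fun b _ => (hSmeas b).nullMeasurableSet)]
      calc volume (⋃ b ∈ Finset.range N, S b) ≤ volume (Set.Icc (0:ℝ) 1) := by
            apply measure_mono
            intro s hs
            simp only [Set.mem_iUnion] at hs
            obtain ⟨b, _, hb⟩ := hs
            exact hSsub b hb
      _ = 1 := by simp
    have hex : ∃ n, volume (S n) < ENNReal.ofReal δ := by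
      by_contra hc
      push_neg at hc
      set N := ⌈1/δ⌉₊ + 1 with hN
      have h1 : 1 < (N:ℝ) * δ := by
        have h2 : 1/δ < (N:ℝ) := by
          calc (1:ℝ)/δ ≤ ⌈1/δ⌉₊ := Nat.le_ceil _
          _ < N := by rw [hN]; push_cast; linarith
        rw [div_lt_iff₀ hδ0] at h2
        linarith
      have h2 : (N:ℝ≥0∞) * ENNReal.ofReal δ ≤ ∑ n ∈ Finset.range N, volume (S n) := by
        calc (N:ℝ≥0∞) * ENNReal.ofReal δ = ∑ _n ∈ Finset.range N, ENNReal.ofReal δ := by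
              rw [Finset.sum_const, Finset.card_range, nsmul_eq_mul]
        _ ≤ ∑ n ∈ Finset.range N, volume (S n) := Finset.sum_le_sum (fun i _ => hc i)
      have h3 : (1:ℝ≥0∞) < (N:ℝ≥0∞) * ENNReal.ofReal δ := by
        rw [← ENNReal.ofReal_natCast, ← ENNReal.ofReal_mul (Nat.cast_nonneg N)]
        rw [show (1:ℝ≥0∞) = ENNReal.ofReal 1 by simp]
        exact (ENNReal.ofReal_lt_ofReal_iff (by positivity)).mpr h1
      exact lt_irrefl _ (lt_of_lt_of_le h3 (le_trans h2 (hsum N)))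
    obtain ⟨n, hn⟩ := hex
    have hμn_top : volume (S n) ≠ ⊤ := by
      apply ne_top_of_le_ne_top (by norm_num : (1:ℝ≥0∞) ≠ ⊤)
      calc volume (S n) ≤ volume (Set.Icc (0:ℝ) 1) := measure_mono (hSsub n)
      _ = 1 := by simp
    have hμn_ne : volume (S n) ≠ 0 := by
      intro hc
      have hzero : ∀ᵐ s ∂mu01, xs n s = 0 := by
        have hbad : MeasurableSet {a : ℝ | ¬ xs n a = 0} := by
          have he : {a : ℝ | ¬ xs n a = 0} = (xs n) ⁻¹' ({0}ᶜ) := rfl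
          rw [he]
          exact (hmeas n) (measurableSet_singleton 0).compl
        rw [MeasureTheory.ae_iff, mu01, MeasureTheory.Measure.restrict_apply hbad]
        apply measure_mono_null _ hc
        intro s hs
        exact ⟨hs.2, hs.1⟩
      exact absurd ((NE.eq_zero_iff (xs n) (hmeas n)).2 hzero) (ne_of_gt (hpos n).1)
    set m := (volume (S n)).toReal with hmdef
    have hm0 : 0 < m := ENNReal.toReal_pos hμn_ne hμn_top
    have hm1 : m ≤ 1 := by
      rw [hmdef]
      calc (volume (S n)).toReal ≤ (1:ℝ≥0∞).toReal := by
            apply ENNReal.toReal_mono (by norm_num)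
            calc volume (S n) ≤ volume (Set.Icc (0:ℝ) 1) := measure_mono (hSsub n)
            _ = 1 := by simp
      _ = 1 := by simp
    have hmδ : m < δ := ENNReal.toReal_lt_of_lt_ofReal hn
    have hofm : ENNReal.ofReal m = volume (S n) := ENNReal.ofReal_toReal hμn_top
    have hvanish : ∀ s : ℝ, m ≤ s → rearr (xs n) s = 0 := by
      intro s hms
      have hd : distr (xs n) 0 ≤ ENNReal.ofReal s := by
        calc distr (xs n) 0 ≤ volume (S n) := by
              apply measure_mono
              intro u hu
              exact ⟨hu.1, fun hc => by
                have := hu.2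
                rw [hc] at this
                simpa using this⟩
        _ = ENNReal.ofReal m := hofm.symm
        _ ≤ ENNReal.ofReal s := ENNReal.ofReal_le_ofReal hms
      apply le_antisymm _ (rearr_nonneg _ _)
      apply csInf_le ⟨0, fun y hy => hy.1⟩
      exact ⟨le_refl 0, hd⟩
    have hkey : marcNorm ψ (xs n) ≤ ENNReal.ofReal (1/(2*B)) * NE.N (xs n) := by
      rw [marcNorm]
      apply iSup₂_le
      intro t ht
      set t' := min t m with ht'def
      have ht'mem : t' ∈ Set.Ioc (0:ℝ) 1 := ⟨lt_min ht.1 hm0, le_trans (min_le_left _ _) ht.2⟩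
      have ht't : t' ≤ t := min_le_left _ _
      have hIeq : (∫⁻ s in Set.Ioc (0:ℝ) t, ENNReal.ofReal (rearr (xs n) s))
          = ∫⁻ s in Set.Ioc (0:ℝ) t', ENNReal.ofReal (rearr (xs n) s) := by
        have hunion : Set.Ioc (0:ℝ) t' ∪ Set.Ioc t' t = Set.Ioc 0 t :=
          Set.Ioc_union_Ioc_eq_Ioc (le_of_lt ht'mem.1) ht't
        rw [← hunion, MeasureTheory.lintegral_union measurableSet_Ioc
          (Set.Ioc_disjoint_Ioc.mpr (le_trans (min_le_left _ _) (le_max_right _ _)))]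
        have hzero2 : (∫⁻ s in Set.Ioc t' t, ENNReal.ofReal (rearr (xs n) s)) = 0 := by
          have hptwise : ∀ s : ℝ, s ∈ Set.Ioc t' t → ENNReal.ofReal (rearr (xs n) s) = 0 := by
            intro s hs
            have hms : m ≤ s := by
              rcases le_or_gt t m with h | h
              · have ht'eq : t' = t := by rw [ht'def, min_eq_left h]
                rw [ht'eq] at hs
                linarith [hs.1, hs.2]
              · have ht'eq : t' = m := by rw [ht'def, min_eq_right h.le]
                rw [ht'eq] at hs
                exact hs.1.le
            rw [hvanish s hms]
            simp
          rw [MeasureTheory.setLIntegral_congr_fun measurableSet_Ioc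
            hptwise]
          simp
        rw [hzero2, add_zero]
      rw [hIeq]
      have hψdiv : ψ t / t ≤ ψ t' / t' := concave_div_anti hψconc hψpos ht'mem.1 ht't ht.2
      have ht'δ : t' < δ := lt_of_le_of_lt (min_le_right _ _) hmδ
      have hsmall := hδ ht'mem.1 (by rw [Real.dist_eq, sub_zero, abs_of_pos ht'mem.1]; exact ht'δ)
      rw [Real.dist_eq, sub_zero] at hsmall
      have hφt' := hφpos t' ht'mem
      have hψφ : ψ t' / φ t' < 1/(2*B) := lt_of_abs_lt hsmall
      have hψt' : ψ t' ≤ (1/(2*B)) * φ t' := by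
        rw [div_lt_iff₀ hφt'] at hψφ
        linarith
      have hdiv2 : ψ t' / t' ≤ (1/(2*B)) * (φ t' / t') := by
        rw [← mul_div_assoc]
        exact (div_le_div_iff_of_pos_right ht'mem.1).mpr hψt'
      calc ENNReal.ofReal (ψ t/t) * ∫⁻ s in Set.Ioc (0:ℝ) t', ENNReal.ofReal (rearr (xs n) s)
          ≤ ENNReal.ofReal (ψ t'/t')
            * ∫⁻ s in Set.Ioc (0:ℝ) t', ENNReal.ofReal (rearr (xs n) s) :=
            mul_le_mul_left (ENNReal.ofReal_le_ofReal hψdiv) _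
      _ ≤ ENNReal.ofReal ((1/(2*B)) * (φ t'/t'))
            * ∫⁻ s in Set.Ioc (0:ℝ) t', ENNReal.ofReal (rearr (xs n) s) :=
            mul_le_mul_left (ENNReal.ofReal_le_ofReal hdiv2) _
      _ = ENNReal.ofReal (1/(2*B)) * (ENNReal.ofReal (φ t'/t')
            * ∫⁻ s in Set.Ioc (0:ℝ) t', ENNReal.ofReal (rearr (xs n) s)) := by
            rw [ENNReal.ofReal_mul hη.le, mul_assoc]
      _ ≤ ENNReal.ofReal (1/(2*B)) * NE.N (xs n) :=
            mul_le_mul_right (lemmaK NE φ hfund (hmeas n) ht'mem hφt') _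
    have hx₀span : xs n ∈ Submodule.span ℝ (Set.range xs) :=
      Submodule.subset_span (Set.mem_range_self n)
    have hchain : NE.N (xs n) ≤ ENNReal.ofReal (1/2) * NE.N (xs n) := by
      calc NE.N (xs n) ≤ ENNReal.ofReal B * marcNorm ψ (xs n) := hspan (xs n) hx₀span
      _ ≤ ENNReal.ofReal B * (ENNReal.ofReal (1/(2*B)) * NE.N (xs n)) :=
          mul_le_mul_right hkey _
      _ = ENNReal.ofReal (B * (1/(2*B))) * NE.N (xs n) := by
          rw [← mul_assoc, ← ENNReal.ofReal_mul hB.le]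
      _ = ENNReal.ofReal (1/2) * NE.N (xs n) := by
          have hBne : B ≠ 0 := ne_of_gt hB
          rw [show B * (1/(2*B)) = 1/2 by field_simp]
    have hlt : ENNReal.ofReal (1/2) * NE.N (xs n) < NE.N (xs n) := by
      have h12 : ENNReal.ofReal (1/2) < 1 := by
        rw [show (1:ℝ≥0∞) = ENNReal.ofReal 1 by simp]
        exact (ENNReal.ofReal_lt_ofReal_iff one_pos).mpr (by norm_num)
      calc ENNReal.ofReal (1/2) * NE.N (xs n) < 1 * NE.N (xs n) :=
            ENNReal.mul_lt_mul_left (ne_of_gt (hpos n).1) (ne_of_lt (hpos n).2) h12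
      _ = NE.N (xs n) := one_mul _
    exact absurd hchain (not_le.2 hlt)
end
end

section
/- Let N_E be a symmetric-space norm on [0,1] with fundamental function φ(t) = N_E(χ_{(0,t)}), and suppose lim_{t→0+} t/φ(t) = 0 (this holds precisely when the associated symmetric space E := {x : N_E(x) < ∞} is different from L₁[0,1]). Then there is a constant C > 0 such that ∫₀¹|x(s)|ds ≤ C·N_E(x) for every measurable x (so E ⊆ L₁[0,1]), and the identity inclusion I : E → L₁[0,1] is disjointly strictly singular: there exist no sequence (x_n) of measurable functions with pairwise disjoint supports and 0 < N_E(x_n) < ∞ for all n, and no constant B > 0, such that N_E(y) ≤ B·‖y‖_{L¹[0,1]} for every y in the linear span of {x_n}. -/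
open MeasureTheory Set Filter Topology
open scoped ENNReal

noncomputable section

namespace SymmProofAux

lemma N_zero (NE : SymmetricNorm) : NE.N (fun _ => (0:ℝ)) = 0 := by
  have h := NE.smul_eq 0 (fun _ => 0)
  simpa only [zero_mul, abs_zero, ENNReal.ofReal_zero] using h

lemma N_sum_le (NE : SymmetricNorm) (f : ℕ → ℝ → ℝ) (n : ℕ) :
    NE.N (∑ k ∈ Finset.range n, f k) ≤ ∑ k ∈ Finset.range n, NE.N (f k) := by
  induction n with
  | zero =>
      simp only [Finset.range_zero, Finset.sum_empty]
      exact le_of_eq (by simpa [Pi.zero_def] using N_zero NE)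
  | succ m ih =>
      rw [Finset.sum_range_succ, Finset.sum_range_succ]
      exact le_trans (NE.add_le _ _) (add_le_add ih le_rfl)

/-- translation invariance on the circle of circumference `t'` -/
lemma periodic_shift_measure {t' θ : ℝ} (ht' : 0 < t') (hθ0 : 0 ≤ θ) (hθ : θ < t')
    (G : Set ℝ) (hG : MeasurableSet G) (hper : ∀ v, v + t' ∈ G ↔ v ∈ G) :
    volume (Ico (0:ℝ) t' ∩ (fun s => s - θ) ⁻¹' G) = volume (Ico (0:ℝ) t' ∩ G) := by
  have h1 : Ico (0:ℝ) t' ∩ (fun s => s - θ) ⁻¹' G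
      = (fun s => s + (-θ)) ⁻¹' (Ico (-θ) (t' - θ) ∩ G) := by
    ext s
    simp only [mem_inter_iff, mem_preimage, mem_Ico]
    constructor
    · rintro ⟨⟨h0, h2⟩, hg⟩
      exact ⟨⟨by linarith, by linarith⟩, by simpa [sub_eq_add_neg] using hg⟩
    · rintro ⟨⟨h0, h2⟩, hg⟩
      exact ⟨⟨by linarith, by linarith⟩, by simpa [sub_eq_add_neg] using hg⟩
  rw [h1, measure_preimage_add_right]
  have h2 : Ico (-θ) (t' - θ) = Ico (-θ) 0 ∪ Ico 0 (t' - θ) :=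
    (Set.Ico_union_Ico_eq_Ico (by linarith) (by linarith)).symm
  have h3 : volume (Ico (-θ) 0 ∩ G) = volume (Ico (t' - θ) t' ∩ G) := by
    have h4 : (fun v : ℝ => v + (-t')) ⁻¹' (Ico (-θ) 0 ∩ G) = Ico (t' - θ) t' ∩ G := by
      ext v
      simp only [mem_preimage, mem_inter_iff, mem_Ico]
      constructor
      · rintro ⟨⟨ha, hb⟩, hg⟩
        refine ⟨⟨by linarith, by linarith⟩, ?_⟩
        have h5 := hper (v - t')
        simp only [sub_add_cancel] at h5
        have hg' : v - t' ∈ G := by simpa [sub_eq_add_neg] using hg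
        exact h5.mpr hg'
      · rintro ⟨⟨ha, hb⟩, hg⟩
        refine ⟨⟨by linarith, by linarith⟩, ?_⟩
        have h5 := hper (v - t')
        simp only [sub_add_cancel] at h5
        have hg' : v - t' ∈ G := h5.mp hg
        simpa [sub_eq_add_neg] using hg'
    calc volume (Ico (-θ) 0 ∩ G)
        = volume ((fun v : ℝ => v + (-t')) ⁻¹' (Ico (-θ) 0 ∩ G)) :=
          (measure_preimage_add_right volume _ _).symm
      _ = volume (Ico (t' - θ) t' ∩ G) := by rw [h4]
  have hd1 : Disjoint (Ico (-θ) (0:ℝ) ∩ G) (Ico (0:ℝ) (t' - θ) ∩ G) :=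
    (Set.Ico_disjoint_Ico_same).mono inter_subset_left inter_subset_left
  have hd2 : Disjoint (Ico (0:ℝ) (t' - θ) ∩ G) (Ico (t' - θ) t' ∩ G) :=
    (Set.Ico_disjoint_Ico_same).mono inter_subset_left inter_subset_left
  calc volume (Ico (-θ) (t' - θ) ∩ G)
      = volume ((Ico (-θ) 0 ∩ G) ∪ (Ico 0 (t' - θ) ∩ G)) := by
        rw [h2, Set.union_inter_distrib_right]
    _ = volume (Ico (-θ) 0 ∩ G) + volume (Ico 0 (t' - θ) ∩ G) :=
        measure_union hd1 (measurableSet_Ico.inter hG)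
    _ = volume (Ico 0 (t' - θ) ∩ G) + volume (Ico (t' - θ) t' ∩ G) := by rw [h3]; ring
    _ = volume ((Ico 0 (t' - θ) ∩ G) ∪ (Ico (t' - θ) t' ∩ G)) :=
        (measure_union hd2 (measurableSet_Ico.inter hG)).symm
    _ = volume (Ico (0:ℝ) t' ∩ G) := by
        rw [← Set.union_inter_distrib_right, Set.Ico_union_Ico_eq_Ico (by linarith) (by linarith)]

lemma emod_inv_aux (n' q k : ℤ) (hn' : 0 < n') (hk0 : 0 ≤ k) (hkn : k < n') :
    (q - (q - k) % n') % n' = k := by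
  have h1 : (q - (q - k) % n') % n' = (q - (q - k)) % n' := by
    conv_lhs => rw [Int.sub_emod]
    conv_rhs => rw [Int.sub_emod]
    rw [Int.emod_emod_of_dvd _ dvd_rfl]
  rw [h1, sub_sub_cancel, Int.emod_eq_of_lt hk0 hkn]

end SymmProofAux


lemma core (NE : SymmetricNorm) (φ : ℝ → ℝ)
    (hφpos : ∀ t ∈ Set.Ioc (0:ℝ) 1, 0 < φ t)
    (hfund : ∀ t ∈ Set.Ioc (0:ℝ) 1,
      NE.N ((Set.Ioo (0:ℝ) t).indicator (fun _ => (1:ℝ))) = ENNReal.ofReal (φ t))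
    (t' : ℝ) (ht' : t' ∈ Set.Ioc (0:ℝ) 1)
    (M : ℝ) (hM : 0 ≤ M)
    (y : ℝ → ℝ) (hy : Measurable y) (hy0 : ∀ s, 0 ≤ y s) (hyM : ∀ s, y s ≤ M)
    (hsupp : volume {s ∈ Icc (0:ℝ) 1 | y s ≠ 0} ≤ ENNReal.ofReal t') :
    (∫⁻ s in Set.Icc (0:ℝ) 1, ENNReal.ofReal |y s|) ≤ ENNReal.ofReal (t' / φ t') * NE.N y := by
  obtain ⟨ht'0, ht'1⟩ := ht'
  have hφ : 0 < φ t' := hφpos t' ⟨ht'0, ht'1⟩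
  set d : ℝ → ℝ≥0∞ := fun τ => volume {s ∈ Icc (0:ℝ) 1 | τ < y s} with hd_def
  have habs : ∀ s, |y s| = y s := fun s => abs_of_nonneg (hy0 s)
  have hdistr_y : ∀ τ, distr y τ = d τ := by
    intro τ
    rw [hd_def]
    unfold distr
    congr 1
    ext s
    simp only [mem_sep_iff, habs]
  have hd_anti : Antitone d := by
    intro τ1 τ2 h12
    rw [hd_def]
    exact measure_mono (fun s hs => ⟨hs.1, lt_of_le_of_lt h12 hs.2⟩)
  have hd_le_one : ∀ τ, d τ ≤ 1 := by
    intro τ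
    rw [hd_def]
    calc volume {s ∈ Icc (0:ℝ) 1 | τ < y s} ≤ volume (Icc (0:ℝ) 1) :=
          measure_mono (fun s hs => hs.1)
      _ = 1 := by simp [Real.volume_Icc]
  have hdM : ∀ τ, M ≤ τ → d τ = 0 := by
    intro τ hτ
    have hset : {s ∈ Icc (0:ℝ) 1 | τ < y s} = ∅ := by
      ext s
      simp only [mem_sep_iff, mem_empty_iff_false, iff_false, not_and, not_lt]
      exact fun _ => (hyM s).trans hτ
    rw [hd_def]
    simp only [hset, measure_empty]
  have hd0 : d 0 ≤ ENNReal.ofReal t' := by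
    rw [hd_def]
    refine le_trans (measure_mono ?_) hsupp
    rintro s ⟨hs1, hs2⟩
    exact ⟨hs1, ne_of_gt hs2⟩
  have hd_rc : ∀ τ : ℝ, d τ = ⨆ n : ℕ, d (τ + 1/((n:ℝ)+1)) := by
    intro τ
    have hset : {s ∈ Icc (0:ℝ) 1 | τ < y s}
        = ⋃ n : ℕ, {s ∈ Icc (0:ℝ) 1 | τ + 1/((n:ℝ)+1) < y s} := by
      ext s
      simp only [mem_iUnion, mem_sep_iff]
      constructor
      · rintro ⟨h1, h2⟩
        obtain ⟨n, hn⟩ := exists_nat_one_div_lt (sub_pos.2 h2)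
        exact ⟨n, h1, by linarith⟩
      · rintro ⟨n, h1, h2⟩
        have hpos : (0:ℝ) < 1/((n:ℝ)+1) := by positivity
        exact ⟨h1, by linarith⟩
    have hdir : Directed (· ⊆ ·) (fun n : ℕ => {s ∈ Icc (0:ℝ) 1 | τ + 1/((n:ℝ)+1) < y s}) := by
      refine Monotone.directed_le ?_
      intro a b hab s hs
      refine ⟨hs.1, lt_of_le_of_lt ?_ hs.2⟩
      have : 1/((b:ℝ)+1) ≤ 1/((a:ℝ)+1) := by
        apply one_div_le_one_div_of_le (by positivity)
        exact_mod_cast add_le_add (Nat.cast_le.2 hab) (le_refl (1:ℝ))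
      linarith
    conv_lhs => rw [hd_def]
    simp only [hset]
    rw [hdir.measure_iUnion]
  -- rearrangement facts
  set r : ℝ → ℝ := rearr y with hr_def
  set S : ℝ → Set ℝ := fun u => {τ : ℝ | 0 ≤ τ ∧ d τ ≤ ENNReal.ofReal u} with hS_def
  have hr_eq : ∀ u, r u = sInf (S u) := by
    intro u
    rw [hr_def, hS_def]
    unfold rearr
    congr 1
    ext τ
    simp only [mem_setOf_eq, hdistr_y]
  have hMmem : ∀ u, M ∈ S u := by
    intro u
    rw [hS_def]
    exact ⟨hM, by rw [hdM M le_rfl]; exact zero_le⟩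
  have hbdd : ∀ u, BddBelow (S u) := fun u => ⟨0, fun τ hτ => hτ.1⟩
  have hne : ∀ u, (S u).Nonempty := fun u => ⟨M, hMmem u⟩
  have hr_nonneg : ∀ u, 0 ≤ r u := by
    intro u
    rw [hr_eq]
    exact Real.sInf_nonneg (fun τ hτ => hτ.1)
  have hr_le_M : ∀ u, r u ≤ M := fun u => by rw [hr_eq]; exact csInf_le (hbdd u) (hMmem u)
  have hr_anti : Antitone r := by
    intro u v huv
    rw [hr_eq, hr_eq]
    refine csInf_le_csInf (hbdd v) (hne u) ?_
    rintro τ ⟨hτ1, hτ2⟩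
    exact ⟨hτ1, hτ2.trans (ENNReal.ofReal_le_ofReal huv)⟩
  have key_iff : ∀ u τ, 0 ≤ τ → (d τ ≤ ENNReal.ofReal u ↔ r u ≤ τ) := by
    intro u τ hτ
    constructor
    · intro h
      rw [hr_eq]
      exact csInf_le (hbdd u) ⟨hτ, h⟩
    · intro h
      rw [hd_rc τ]
      refine iSup_le fun n => ?_
      have hpos : (0:ℝ) < 1/((n:ℝ)+1) := by positivity
      have h1 : sInf (S u) < τ + 1/((n:ℝ)+1) := by
        rw [← hr_eq]; linarith
      obtain ⟨τ', hτ'mem, hτ'lt⟩ := exists_lt_of_csInf_lt (hne u) h1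
      exact le_trans (hd_anti hτ'lt.le) hτ'mem.2
  have hr_zero : ∀ u, t' ≤ u → r u = 0 := by
    intro u hu
    refine le_antisymm ?_ (hr_nonneg u)
    rw [hr_eq]
    exact csInf_le (hbdd u) ⟨le_rfl, hd0.trans (ENNReal.ofReal_le_ofReal hu)⟩
  have hr_meas : Measurable r := hr_anti.measurable
  -- distribution of r
  have hdistr_r : ∀ τ, 0 ≤ τ → volume {s ∈ Icc (0:ℝ) 1 | τ < r s} = d τ := by
    intro τ hτ
    have hfin : d τ ≠ ⊤ := (lt_of_le_of_lt (hd_le_one τ) (by norm_num)).ne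
    set D := (d τ).toReal with hD
    have hDof : ENNReal.ofReal D = d τ := ENNReal.ofReal_toReal hfin
    have hD1 : D ≤ 1 := by
      rw [hD]
      exact ENNReal.toReal_le_of_le_ofReal zero_le_one (by simpa using hd_le_one τ)
    have hset : {s ∈ Icc (0:ℝ) 1 | τ < r s} = Ico (0:ℝ) D := by
      ext s
      simp only [mem_sep_iff, mem_Icc, mem_Ico]
      constructor
      · rintro ⟨⟨hs0, hs1⟩, hlt⟩
        have hnle : ¬ (r s ≤ τ) := not_le.2 hlt
        rw [← key_iff s τ hτ] at hnle
        have hlt2 : ENNReal.ofReal s < d τ := not_le.1 hnle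
        rw [← hDof] at hlt2
        exact ⟨hs0, (ENNReal.ofReal_lt_ofReal_iff_of_nonneg hs0).1 hlt2⟩
      · rintro ⟨hs0, hsD⟩
        refine ⟨⟨hs0, le_trans hsD.le hD1⟩, ?_⟩
        by_contra hcon
        push_neg at hcon
        rw [← key_iff s τ hτ, ← hDof] at hcon
        exact absurd ((ENNReal.ofReal_le_ofReal_iff hs0).1 hcon) (not_le.2 hsD)
    rw [hset, Real.volume_Ico, sub_zero, hDof]
  -- layer cake: ∫ y = ∫ r =: I
  have hlc : ∀ (g : ℝ → ℝ), Measurable g → (∀ s, 0 ≤ g s) →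
      (∫⁻ s in Icc (0:ℝ) 1, ENNReal.ofReal (g s))
        = ∫⁻ τ in Ioi (0:ℝ), volume {s ∈ Icc (0:ℝ) 1 | τ < g s} := by
    intro g hg hg0
    rw [MeasureTheory.lintegral_eq_lintegral_meas_lt _ (Filter.Eventually.of_forall hg0)
      hg.aemeasurable]
    refine setLIntegral_congr_fun measurableSet_Ioi (fun τ hτ => ?_)
    rw [Measure.restrict_apply (measurableSet_lt measurable_const hg)]
    congr 1
    ext s
    simp only [mem_inter_iff, mem_setOf_eq, mem_sep_iff]
    tauto
  set I := ∫⁻ s in Icc (0:ℝ) 1, ENNReal.ofReal (y s) with hI_def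
  have hI_fin : I ≠ ⊤ := by
    have hb : I ≤ ENNReal.ofReal M * volume (Icc (0:ℝ) 1) := by
      rw [hI_def, ← setLIntegral_const]
      exact setLIntegral_mono measurable_const (fun s _ => ENNReal.ofReal_le_ofReal (hyM s))
    refine ne_top_of_le_ne_top ?_ hb
    simp [Real.volume_Icc]
  have hIr : I = ∫⁻ s in Icc (0:ℝ) 1, ENNReal.ofReal (r s) := by
    rw [hI_def, hlc y hy hy0, hlc r hr_meas hr_nonneg]
    refine setLIntegral_congr_fun measurableSet_Ioi (fun τ hτ => ?_)
    rw [hdistr_r τ (le_of_lt hτ)]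
  have hIr2 : I = ∫⁻ v in Ico (0:ℝ) t', ENNReal.ofReal (r v) := by
    rw [hIr]
    have hunion : Icc (0:ℝ) 1 = Ico 0 t' ∪ Icc t' 1 :=
      (Set.Ico_union_Icc_eq_Icc ht'0.le ht'1).symm
    have hdisj : Disjoint (Ico (0:ℝ) t') (Icc t' 1) :=
      Set.disjoint_left.2 (fun s hs hs' => absurd hs'.1 (not_le.2 hs.2))
    rw [hunion, lintegral_union measurableSet_Icc hdisj]
    have hz : ∫⁻ v in Icc t' 1, ENNReal.ofReal (r v) = 0 := by
      rw [setLIntegral_congr_fun measurableSet_Icc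
        (fun v hv => ?_), lintegral_zero]
      rw [hr_zero v hv.1, ENNReal.ofReal_zero]
    rw [hz, add_zero]
  -- periodic extension of r
  set F : ℝ → ℝ := fun v => r (v - t' * (⌊v / t'⌋ : ℝ)) with hF_def
  have hF_meas : Measurable F := by
    rw [hF_def]
    refine hr_meas.comp ?_
    refine measurable_id.sub (measurable_const.mul ?_)
    exact (measurable_of_countable (fun z : ℤ => (z:ℝ))).comp
      ((measurable_id.div_const t').floor)
  have hF_nonneg : ∀ v, 0 ≤ F v := fun v => hr_nonneg _
  have hF_eq : ∀ v, 0 ≤ v → v < t' → F v = r v := by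
    intro v h0 h1
    rw [hF_def]
    have : ⌊v / t'⌋ = 0 := by
      rw [Int.floor_eq_zero_iff]
      constructor
      · positivity
      · rw [div_lt_one ht'0]; exact h1
    simp [this]
  have hF_per : ∀ v, F (v + t') = F v := by
    intro v
    rw [hF_def]
    have h1 : (v + t') / t' = v / t' + 1 := by field_simp
    simp only [h1, Int.floor_add_one]
    push_cast
    ring_nf
  -- main estimate for each n
  have main : ∀ n : ℕ, 1 ≤ n →
      ENNReal.ofReal (I.toReal / t' - M / n) * ENNReal.ofReal (φ t') ≤ NE.N y := by
    intro n hn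
    have hnR : (0:ℝ) < n := by exact_mod_cast hn
    set h : ℝ := t' / n with hh_def
    have hh0 : 0 < h := div_pos ht'0 hnR
    have ht'nh : t' = (n:ℝ) * h := by rw [hh_def]; field_simp
    set rot : ℕ → ℝ → ℝ := fun k => (Ico (0:ℝ) t').indicator (fun s => F (s - k * h))
      with hrot_def
    have hrot_meas : ∀ k : ℕ, Measurable (rot k) := by
      intro k
      rw [hrot_def]
      exact (hF_meas.comp (measurable_id.sub measurable_const)).indicator measurableSet_Ico
    have hrot_nonneg : ∀ k s, 0 ≤ rot k s := by
      intro k s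
      rw [hrot_def]
      exact Set.indicator_apply_nonneg (fun _ => hF_nonneg _)
    -- distribution of rot k equals that of y
    have hrotN : ∀ k : ℕ, k < n → NE.N (rot k) = NE.N y := by
      intro k hk
      have hθ0 : (0:ℝ) ≤ k * h := by positivity
      have hθlt : (k:ℝ) * h < t' := by
        rw [ht'nh]
        have : (k:ℝ) < n := by exact_mod_cast hk
        exact mul_lt_mul_of_pos_right this hh0
      refine NE.symm (rot k) y (hrot_meas k) hy ?_
      intro τ hτ
      rw [hdistr_y]
      set G : Set ℝ := {v : ℝ | τ < F v} with hG_def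
      have hGmeas : MeasurableSet G := measurableSet_lt measurable_const hF_meas
      have hGper : ∀ v, v + t' ∈ G ↔ v ∈ G := by
        intro v
        simp only [hG_def, mem_setOf_eq, hF_per]
      have hset1 : {s ∈ Icc (0:ℝ) 1 | τ < |rot k s|}
          = Ico (0:ℝ) t' ∩ (fun s => s - k * h) ⁻¹' G := by
        ext s
        simp only [mem_sep_iff, mem_inter_iff, mem_preimage, hG_def, mem_setOf_eq]
        constructor
        · rintro ⟨hs1, hs2⟩
          by_cases hmem : s ∈ Ico (0:ℝ) t'
          · refine ⟨hmem, ?_⟩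
            rw [hrot_def] at hs2
            simp only [Set.indicator_of_mem hmem] at hs2
            rwa [abs_of_nonneg (hF_nonneg _)] at hs2
          · exfalso
            rw [hrot_def] at hs2
            simp only [Set.indicator_of_notMem hmem] at hs2
            rw [abs_zero] at hs2
            exact absurd hs2 (not_lt.2 hτ.le)
        · rintro ⟨hs1, hs2⟩
          refine ⟨⟨hs1.1, hs1.2.le.trans ht'1⟩, ?_⟩
          rw [hrot_def]
          simp only [Set.indicator_of_mem hs1]
          rwa [abs_of_nonneg (hF_nonneg _)]
      have hset2 : Ico (0:ℝ) t' ∩ G = {s ∈ Icc (0:ℝ) 1 | τ < r s} := by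
        ext s
        simp only [mem_inter_iff, hG_def, mem_setOf_eq, mem_sep_iff, mem_Ico, mem_Icc]
        constructor
        · rintro ⟨⟨hs0, hst⟩, hF'⟩
          rw [hF_eq s hs0 hst] at hF'
          exact ⟨⟨hs0, hst.le.trans ht'1⟩, hF'⟩
        · rintro ⟨⟨hs0, hs1⟩, hrs⟩
          have hst : s < t' := by
            by_contra hcon
            push_neg at hcon
            rw [hr_zero s hcon] at hrs
            exact absurd hrs (not_lt.2 hτ.le)
          rw [hF_eq s hs0 hst]
          exact ⟨⟨hs0, hst⟩, hrs⟩
      unfold distr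
      rw [show {s ∈ Icc (0:ℝ) 1 | τ < |rot k s|} = Ico (0:ℝ) t' ∩ (fun s => s - k*h) ⁻¹' G
        from hset1]
      rw [SymmProofAux.periodic_shift_measure ht'0 hθ0 hθlt G hGmeas hGper]
      rw [hset2]
      exact hdistr_r τ hτ.le
    -- norm of the average
    set A : ℝ → ℝ := fun s => (n:ℝ)⁻¹ * ∑ k ∈ Finset.range n, rot k s with hA_def
    have hA_nonneg : ∀ s, 0 ≤ A s := by
      intro s
      rw [hA_def]
      exact mul_nonneg (by positivity) (Finset.sum_nonneg (fun k _ => hrot_nonneg k s))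
    have hNA : NE.N A ≤ NE.N y := by
      have hA_eq : A = fun s => (n:ℝ)⁻¹ * (∑ k ∈ Finset.range n, rot k) s := by
        funext s
        rw [hA_def, Finset.sum_apply]
      have h2 : NE.N A = ENNReal.ofReal ((n:ℝ)⁻¹) * NE.N (∑ k ∈ Finset.range n, rot k) := by
        rw [hA_eq, NE.smul_eq, abs_of_nonneg (by positivity : (0:ℝ) ≤ (n:ℝ)⁻¹)]
      have h3 : NE.N (∑ k ∈ Finset.range n, rot k) ≤ (n : ℝ≥0∞) * NE.N y := by
        refine le_trans (SymmProofAux.N_sum_le NE rot n) ?_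
        rw [Finset.sum_congr rfl (fun k hk => hrotN k (Finset.mem_range.1 hk))]
        rw [Finset.sum_const, Finset.card_range, nsmul_eq_mul]
      rw [h2]
      calc ENNReal.ofReal ((n:ℝ)⁻¹) * NE.N (∑ k ∈ Finset.range n, rot k)
          ≤ ENNReal.ofReal ((n:ℝ)⁻¹) * ((n:ℝ≥0∞) * NE.N y) := mul_le_mul_right h3 _
        _ = (ENNReal.ofReal ((n:ℝ)⁻¹) * (n:ℝ≥0∞)) * NE.N y := by rw [mul_assoc]
        _ = NE.N y := by
            rw [ENNReal.ofReal_inv_of_pos hnR, ENNReal.ofReal_natCast,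
              ENNReal.inv_mul_cancel (Nat.cast_ne_zero.2 (by omega)) (by simp), one_mul]
    -- pointwise sandwich
    have hsand : ∀ s, s ∈ Ico (0:ℝ) t' → I.toReal / t' - M / n ≤ A s := by
      have hsplit : ∀ m : ℕ,
          (∫⁻ v in Ico (0:ℝ) ((m:ℝ)*h), ENNReal.ofReal (r v))
            ≤ ∑ j ∈ Finset.range m, ENNReal.ofReal (r ((j:ℝ)*h)) * ENNReal.ofReal h := by
        intro m
        induction m with
        | zero => simp
        | succ p ih =>
            have hcast : ((p+1:ℕ):ℝ) * h = (p:ℝ)*h + h := by push_cast; ring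
            have hun : Ico (0:ℝ) (((p+1:ℕ):ℝ)*h) = Ico 0 ((p:ℝ)*h) ∪ Ico ((p:ℝ)*h) ((p:ℝ)*h + h) := by
              rw [hcast, Set.Ico_union_Ico_eq_Ico (by positivity) (by linarith)]
            rw [hun, lintegral_union measurableSet_Ico
              (Set.Ico_disjoint_Ico_same), Finset.sum_range_succ]
            refine add_le_add ih ?_
            have hb : ∀ v ∈ Ico ((p:ℝ)*h) ((p:ℝ)*h + h), ENNReal.ofReal (r v)
                ≤ ENNReal.ofReal (r ((p:ℝ)*h)) := fun v hv =>
              ENNReal.ofReal_le_ofReal (hr_anti hv.1)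
            calc (∫⁻ v in Ico ((p:ℝ)*h) ((p:ℝ)*h + h), ENNReal.ofReal (r v))
                ≤ ∫⁻ _ in Ico ((p:ℝ)*h) ((p:ℝ)*h + h), ENNReal.ofReal (r ((p:ℝ)*h)) :=
                  setLIntegral_mono measurable_const hb
              _ = ENNReal.ofReal (r ((p:ℝ)*h)) * volume (Ico ((p:ℝ)*h) ((p:ℝ)*h + h)) :=
                  setLIntegral_const _ _
              _ = ENNReal.ofReal (r ((p:ℝ)*h)) * ENNReal.ofReal h := by
                  rw [Real.volume_Ico]; ring_nf
      have hIb : I ≤ ENNReal.ofReal ((∑ j ∈ Finset.range n, r ((j:ℝ)*h)) * h) := by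
        calc I = ∫⁻ v in Ico (0:ℝ) ((n:ℝ)*h), ENNReal.ofReal (r v) := by rw [hIr2, ← ht'nh]
          _ ≤ ∑ j ∈ Finset.range n, ENNReal.ofReal (r ((j:ℝ)*h)) * ENNReal.ofReal h := hsplit n
          _ = (∑ j ∈ Finset.range n, ENNReal.ofReal (r ((j:ℝ)*h))) * ENNReal.ofReal h := by
              rw [Finset.sum_mul]
          _ = ENNReal.ofReal (∑ j ∈ Finset.range n, r ((j:ℝ)*h)) * ENNReal.ofReal h := by
              rw [ENNReal.ofReal_sum_of_nonneg (fun j _ => hr_nonneg _)]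
          _ = ENNReal.ofReal ((∑ j ∈ Finset.range n, r ((j:ℝ)*h)) * h) := by
              rw [ENNReal.ofReal_mul (Finset.sum_nonneg (fun j _ => hr_nonneg _))]
      intro s hs
      set q : ℤ := ⌊s / h⌋ with hq_def
      set β : ℝ := s / h - q with hβ_def
      have hβ0 : 0 ≤ β := by rw [hβ_def, hq_def]; exact sub_nonneg.2 (Int.floor_le _)
      have hβ1 : β < 1 := by
        rw [hβ_def, hq_def]
        have := Int.lt_floor_add_one (s/h)
        linarith
      have hq0 : 0 ≤ q := by
        rw [hq_def]
        exact Int.floor_nonneg.2 (div_nonneg hs.1 hh0.le)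
      have hqn : q < n := by
        rw [hq_def]
        have h1 : s / h < n := by
          rw [div_lt_iff₀ hh0]
          calc s < t' := hs.2
            _ = (n:ℝ) * h := ht'nh
        exact Int.floor_lt.2 (by exact_mod_cast h1)
      have hs_eq : s = ((q:ℝ) + β) * h := by
        rw [hβ_def]
        field_simp
        ring
      have hfloor : ∀ m : ℤ, ⌊((m:ℝ) + β) / (n:ℝ)⌋ = m / n := by
        intro m
        have hn0 : (0:ℤ) < (n:ℤ) := by exact_mod_cast hn
        have hemod0 : (0:ℤ) ≤ m % n := Int.emod_nonneg m (by omega)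
        have hemodlt : m % (n:ℤ) < n := Int.emod_lt_of_pos m hn0
        have hdecomp : (m:ℝ) = (n:ℝ) * ((m / (n:ℤ) : ℤ):ℝ) + ((m % (n:ℤ) : ℤ):ℝ) := by
          exact_mod_cast congrArg (fun z : ℤ => (z:ℝ)) (Int.mul_ediv_add_emod m n).symm
        have hsplit2 : ((m:ℝ) + β) / (n:ℝ) = ((m / (n:ℤ) : ℤ):ℝ) + (((m % (n:ℤ) : ℤ):ℝ) + β) / (n:ℝ) := by
          rw [hdecomp]
          field_simp
          ring
        rw [hsplit2, Int.floor_intCast_add]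
        have hz : ⌊(((m % (n:ℤ) : ℤ):ℝ) + β) / (n:ℝ)⌋ = 0 := by
          rw [Int.floor_eq_zero_iff]
          have hnum0 : (0:ℝ) ≤ ((m % (n:ℤ) : ℤ):ℝ) + β := by
            have : (0:ℝ) ≤ ((m % (n:ℤ) : ℤ):ℝ) := by exact_mod_cast hemod0
            linarith
          constructor
          · positivity
          · rw [div_lt_one hnR]
            have hcast : ((m % (n:ℤ) : ℤ):ℝ) + 1 ≤ (n:ℝ) := by exact_mod_cast hemodlt
            linarith
        rw [hz, add_zero]
      have hrot_val : ∀ k ∈ Finset.range n,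
          rot k s = r (((((q - k) % (n:ℤ) : ℤ):ℝ) + β) * h) := by
        intro k hk
        have hmem : rot k s = F (s - k * h) := by
          rw [hrot_def]
          simp only [Set.indicator_of_mem hs]
        rw [hmem, hF_def]
        have harg : s - k*h = (((q - k : ℤ):ℝ) + β) * h := by
          rw [hs_eq]; push_cast; ring
        have hdivt' : (s - k*h) / t' = (((q - k:ℤ):ℝ) + β) / (n:ℝ) := by
          rw [harg, ht'nh]
          rw [mul_comm ((n:ℝ)) h, ← div_div]
          rw [mul_div_assoc]
          rw [div_self hh0.ne', mul_one]
        have hfl : ⌊(s - k*h) / t'⌋ = (q - k) / n := by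
          rw [hdivt']
          exact hfloor (q - k)
        beta_reduce
        rw [hfl]
        congr 1
        rw [harg, ht'nh]
        push_cast [Int.emod_def]
        ring
      have hperm : ∑ k ∈ Finset.range n, rot k s
          = ∑ j ∈ Finset.range n, r (((j:ℝ) + β) * h) := by
        rw [Finset.sum_congr rfl hrot_val]
        have hn0 : (0:ℤ) < (n:ℤ) := by exact_mod_cast hn
        have hmod_nonneg : ∀ m:ℤ, 0 ≤ m % (n:ℤ) := fun m => Int.emod_nonneg m hn0.ne'
        have hmod_lt : ∀ m:ℤ, m % (n:ℤ) < (n:ℤ) := fun m => Int.emod_lt_of_pos m hn0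
        refine Finset.sum_nbij' (i := fun k => ((q - k) % (n:ℤ)).toNat)
          (j := fun j => ((q - j) % (n:ℤ)).toNat) ?_ ?_ ?_ ?_ ?_
        · intro a ha
          simp only [Finset.mem_range] at ha ⊢
          have h1 := hmod_nonneg (q - a)
          have h2 := hmod_lt (q - a)
          omega
        · intro a ha
          simp only [Finset.mem_range] at ha ⊢
          have h1 := hmod_nonneg (q - a)
          have h2 := hmod_lt (q - a)
          omega
        · intro a ha
          simp only [Finset.mem_range] at ha
          beta_reduce
          have e1 : ((((q - (a:ℤ)) % (n:ℤ)).toNat : ℤ)) = (q - (a:ℤ)) % (n:ℤ) :=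
            Int.toNat_of_nonneg (hmod_nonneg _)
          rw [e1, SymmProofAux.emod_inv_aux (n:ℤ) q (a:ℤ) hn0 (by exact_mod_cast Nat.zero_le a)
            (by exact_mod_cast ha)]
          simp
        · intro a ha
          simp only [Finset.mem_range] at ha
          beta_reduce
          have e1 : ((((q - (a:ℤ)) % (n:ℤ)).toNat : ℤ)) = (q - (a:ℤ)) % (n:ℤ) :=
            Int.toNat_of_nonneg (hmod_nonneg _)
          rw [e1, SymmProofAux.emod_inv_aux (n:ℤ) q (a:ℤ) hn0 (by exact_mod_cast Nat.zero_le a)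
            (by exact_mod_cast ha)]
          simp
        · intro a ha
          simp only [Finset.mem_range] at ha
          beta_reduce
          have e0 := Int.toNat_of_nonneg (hmod_nonneg (q - a))
          have e1 : ((((q - (a:ℤ)) % (n:ℤ)).toNat : ℕ) : ℝ) = (((q - (a:ℤ)) % (n:ℤ) : ℤ) : ℝ) := by
            exact_mod_cast congrArg (fun z : ℤ => (z:ℝ)) e0
          rw [e1]
      have hsum_ineq : ∑ j ∈ Finset.range n, r ((j:ℝ) * h)
          ≤ M + ∑ j ∈ Finset.range n, r (((j:ℝ) + β) * h) := by
        obtain ⟨m, rfl⟩ : ∃ m, n = m + 1 := ⟨n - 1, by omega⟩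
        rw [Finset.sum_range_succ' (fun j => r ((j:ℝ)*h))]
        have hterm : ∀ i ∈ Finset.range m, r (((i+1:ℕ):ℝ)*h) ≤ r (((i:ℝ)+β)*h) := by
          intro i _
          apply hr_anti
          push_cast
          nlinarith
        calc (∑ i ∈ Finset.range m, r (((i+1:ℕ):ℝ)*h)) + r (((0:ℕ):ℝ)*h)
            ≤ (∑ i ∈ Finset.range m, r (((i:ℝ)+β)*h)) + M := by
              refine add_le_add (Finset.sum_le_sum hterm) ?_
              simpa using hr_le_M 0
          _ ≤ M + ∑ j ∈ Finset.range (m+1), r (((j:ℝ)+β)*h) := by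
              rw [Finset.sum_range_succ]
              have := hr_nonneg (((m:ℝ)+β)*h)
              push_cast
              linarith
      -- combine
      have hAs : ∑ k ∈ Finset.range n, rot k s = (n:ℝ) * A s := by
        rw [hA_def]
        field_simp
      have hIb2 : I ≤ ENNReal.ofReal (M * h + t' * A s) := by
        refine le_trans hIb (ENNReal.ofReal_le_ofReal ?_)
        have h1 : (∑ j ∈ Finset.range n, r ((j:ℝ)*h)) * h
            ≤ (M + ∑ j ∈ Finset.range n, r (((j:ℝ)+β)*h)) * h :=
          mul_le_mul_of_nonneg_right hsum_ineq hh0.le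
        have h2 : (M + ∑ j ∈ Finset.range n, r (((j:ℝ)+β)*h)) * h = M * h + t' * A s := by
          rw [← hperm, hAs, ht'nh]
          ring
        linarith
      have hreal : I.toReal ≤ M * h + t' * A s := by
        refine ENNReal.toReal_le_of_le_ofReal ?_ hIb2
        have := hA_nonneg s
        positivity
      have h3 : I.toReal / t' ≤ (M * h + t' * A s) / t' :=
        (div_le_div_iff_of_pos_right ht'0).mpr hreal
      have h4 : (M * h + t' * A s) / t' = M / n + A s := by
        rw [hh_def]
        field_simp
      linarith
    -- conclude
    have hκA : ∀ s, |(max (I.toReal / t' - M / n) 0) * (Ioo (0:ℝ) t').indicator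
        (fun _ => (1:ℝ)) s| ≤ |A s| := by
      intro s
      by_cases hmem : s ∈ Ioo (0:ℝ) t'
      · rw [Set.indicator_of_mem hmem, mul_one, abs_of_nonneg (le_max_right _ _),
          abs_of_nonneg (hA_nonneg s)]
        exact max_le (hsand s ⟨hmem.1.le, hmem.2⟩) (hA_nonneg s)
      · rw [Set.indicator_of_notMem hmem, mul_zero, abs_zero]
        exact abs_nonneg _
    have hNκ : ENNReal.ofReal (max (I.toReal / t' - M / n) 0) * ENNReal.ofReal (φ t')
        ≤ NE.N y := by
      have h1 := NE.smul_eq (max (I.toReal / t' - M / n) 0)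
        ((Ioo (0:ℝ) t').indicator (fun _ => (1:ℝ)))
      rw [hfund t' ⟨ht'0, ht'1⟩, abs_of_nonneg (le_max_right _ _)] at h1
      rw [← h1]
      exact le_trans (NE.mono _ A (Filter.Eventually.of_forall hκA)) hNA
    refine le_trans (mul_le_mul_left (ENNReal.ofReal_le_ofReal (le_max_left _ _)) _) hNκ
  -- pass to the limit in n
  have hlim2 : ENNReal.ofReal (I.toReal / t') * ENNReal.ofReal (φ t') ≤ NE.N y := by
    have h1 : Tendsto (fun n : ℕ => I.toReal / t' - M / n) atTop (𝓝 (I.toReal / t')) := by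
      have h2 := tendsto_const_div_atTop_nhds_zero_nat M
      have h3 := tendsto_const_nhds (x := I.toReal / t') (f := atTop (α := ℕ))
      simpa using h3.sub h2
    have h4 : Tendsto (fun n : ℕ => ENNReal.ofReal (I.toReal / t' - M / n) * ENNReal.ofReal (φ t'))
        atTop (𝓝 (ENNReal.ofReal (I.toReal / t') * ENNReal.ofReal (φ t'))) :=
      ENNReal.Tendsto.mul_const (ENNReal.tendsto_ofReal h1) (Or.inr ENNReal.ofReal_ne_top)
    refine le_of_tendsto h4 ?_
    filter_upwards [eventually_ge_atTop 1] with n hn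
    exact main n hn
  -- conclude
  have hgoal : I ≤ ENNReal.ofReal (t' / φ t') * NE.N y := by
    have hIto : I = ENNReal.ofReal I.toReal := (ENNReal.ofReal_toReal hI_fin).symm
    calc I = ENNReal.ofReal (t' / φ t' * (I.toReal / t' * φ t')) := by
          rw [hIto]
          congr 1
          field_simp
          rw [ENNReal.toReal_ofReal ENNReal.toReal_nonneg]
      _ = ENNReal.ofReal (t' / φ t') * ENNReal.ofReal (I.toReal / t' * φ t') := by
          rw [ENNReal.ofReal_mul (by positivity)]
      _ = ENNReal.ofReal (t' / φ t') * (ENNReal.ofReal (I.toReal / t') * ENNReal.ofReal (φ t')) := by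
          rw [ENNReal.ofReal_mul (by positivity)]
      _ ≤ ENNReal.ofReal (t' / φ t') * NE.N y := mul_le_mul_right hlim2 _
  calc (∫⁻ s in Set.Icc (0:ℝ) 1, ENNReal.ofReal |y s|)
      = I := by rw [hI_def]; simp only [habs]
    _ ≤ ENNReal.ofReal (t' / φ t') * NE.N y := hgoal

lemma keylemma (NE : SymmetricNorm) (φ : ℝ → ℝ)
    (hφpos : ∀ t ∈ Set.Ioc (0:ℝ) 1, 0 < φ t)
    (hfund : ∀ t ∈ Set.Ioc (0:ℝ) 1,
      NE.N ((Set.Ioo (0:ℝ) t).indicator (fun _ => (1:ℝ))) = ENNReal.ofReal (φ t))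
    (t' : ℝ) (ht' : t' ∈ Set.Ioc (0:ℝ) 1)
    (y : ℝ → ℝ) (hy : Measurable y)
    (hsupp : volume {s ∈ Icc (0:ℝ) 1 | y s ≠ 0} ≤ ENNReal.ofReal t') :
    (∫⁻ s in Set.Icc (0:ℝ) 1, ENNReal.ofReal |y s|) ≤ ENNReal.ofReal (t' / φ t') * NE.N y := by
  have hmain : ∀ Mn : ℕ, (∫⁻ s in Set.Icc (0:ℝ) 1, ENNReal.ofReal (min |y s| (Mn:ℝ)))
      ≤ ENNReal.ofReal (t' / φ t') * NE.N y := by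
    intro Mn
    set yM : ℝ → ℝ := fun s => min |y s| (Mn:ℝ) with hyM_def
    have hyM_meas : Measurable yM := hy.abs.min measurable_const
    have hyM_nonneg : ∀ s, 0 ≤ yM s := fun s => le_min (abs_nonneg _) (Nat.cast_nonneg _)
    have hyM_le : ∀ s, yM s ≤ (Mn:ℝ) := fun s => min_le_right _ _
    have hyM_supp : volume {s ∈ Icc (0:ℝ) 1 | yM s ≠ 0} ≤ ENNReal.ofReal t' := by
      refine le_trans (measure_mono ?_) hsupp
      rintro s ⟨hs1, hs2⟩
      refine ⟨hs1, ?_⟩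
      intro hzero
      apply hs2
      rw [hyM_def]
      simp [hzero]
    have h1 := core NE φ hφpos hfund t' ht' (Mn:ℝ) (Nat.cast_nonneg _) yM hyM_meas
      hyM_nonneg hyM_le hyM_supp
    have h2 : NE.N yM ≤ NE.N y := by
      refine NE.mono yM y (Filter.Eventually.of_forall fun s => ?_)
      rw [abs_of_nonneg (hyM_nonneg s)]
      exact min_le_left _ _
    have h3 : (∫⁻ s in Set.Icc (0:ℝ) 1, ENNReal.ofReal |yM s|)
        = ∫⁻ s in Set.Icc (0:ℝ) 1, ENNReal.ofReal (min |y s| (Mn:ℝ)) := by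
      refine lintegral_congr fun s => ?_
      rw [abs_of_nonneg (hyM_nonneg s)]
    rw [h3] at h1
    exact le_trans h1 (mul_le_mul_right h2 _)
  have hsup : (∫⁻ s in Set.Icc (0:ℝ) 1, ENNReal.ofReal |y s|)
      = ⨆ Mn : ℕ, ∫⁻ s in Set.Icc (0:ℝ) 1, ENNReal.ofReal (min |y s| (Mn:ℝ)) := by
    rw [← lintegral_iSup]
    · refine lintegral_congr fun s => ?_
      refine le_antisymm ?_ (iSup_le fun Mn => ENNReal.ofReal_le_ofReal (min_le_left _ _))
      refine le_iSup_of_le ⌈|y s|⌉₊ ?_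
      rw [min_eq_left (Nat.le_ceil _)]
    · intro Mn
      exact (hy.abs.min measurable_const).ennreal_ofReal
    · intro a b hab s
      exact ENNReal.ofReal_le_ofReal (min_le_min le_rfl (by exact_mod_cast hab))
  rw [hsup]
  exact iSup_le hmain

/-- **Corollary 3.** If `E` is a symmetric space with fundamental function `φ` satisfying
`lim_{t→0+} t/φ(t) = 0` (i.e. `E ≠ L₁`), then `E ⊆ L₁[0,1]` boundedly and the identity
inclusion `I : E → L₁[0,1]` is disjointly strictly singular. -/
theorem symmetric_into_L1_DSS
    (NE : SymmetricNorm) (φ : ℝ → ℝ)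
    (hφpos : ∀ t ∈ Set.Ioc (0:ℝ) 1, 0 < φ t)
    (hfund : ∀ t ∈ Set.Ioc (0:ℝ) 1,
      NE.N ((Set.Ioo (0:ℝ) t).indicator (fun _ => (1:ℝ))) = ENNReal.ofReal (φ t))
    (hlim : Filter.Tendsto (fun t => t / φ t) (nhdsWithin 0 (Set.Ioi 0)) (nhds 0)) :
    (∃ C : ℝ, 0 < C ∧ ∀ x : ℝ → ℝ, Measurable x →
      (∫⁻ s in Set.Icc (0:ℝ) 1, ENNReal.ofReal |x s|) ≤ ENNReal.ofReal C * NE.N x) ∧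
    ¬ DSSFails NE.N (fun y => ∫⁻ s in Set.Icc (0:ℝ) 1, ENNReal.ofReal |y s|) := by
  
  have hφ1 : 0 < φ 1 := hφpos 1 ⟨one_pos, le_rfl⟩
  have hvol1 : volume (Icc (0:ℝ) 1) = 1 := by simp [Real.volume_Icc]
  constructor
  · refine ⟨1 / φ 1, by positivity, fun x hx => ?_⟩
    have h1 := keylemma NE φ hφpos hfund 1 ⟨one_pos, le_rfl⟩ x hx ?_
    · simpa using h1
    · refine le_trans (measure_mono (fun s hs => hs.1)) ?_
      rw [hvol1]
      simp
  · rintro ⟨x, B, hB, hxmeas, hdisj, hxpos, hspan⟩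
    -- choose t' small with B * (t'/φ t') < 1
    have hev : ∀ᶠ t in nhdsWithin (0:ℝ) (Set.Ioi 0),
        t / φ t < 1/(2*B) ∧ t ∈ Set.Ioc (0:ℝ) 1 := by
      have h1 : ∀ᶠ t in nhdsWithin (0:ℝ) (Set.Ioi 0), t / φ t < 1/(2*B) :=
        hlim.eventually_lt_const (by positivity)
      have h2 : ∀ᶠ t in nhdsWithin (0:ℝ) (Set.Ioi 0), t ∈ Set.Ioi (0:ℝ) :=
        eventually_mem_nhdsWithin
      have h3 : ∀ᶠ t in nhdsWithin (0:ℝ) (Set.Ioi 0), t < 1 :=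
        (eventually_lt_nhds one_pos).filter_mono nhdsWithin_le_nhds
      filter_upwards [h1, h2, h3] with t ht1 ht2 ht3
      exact ⟨ht1, ht2, ht3.le⟩
    obtain ⟨t', ht'lt, ht'0, ht'1⟩ := hev.exists
    have hφt : 0 < φ t' := hφpos t' ⟨ht'0, ht'1⟩
    -- supports
    set Su : ℕ → Set ℝ := fun k => Icc (0:ℝ) 1 ∩ {s | x k s ≠ 0} with hSu_def
    have hSmeas : ∀ k, MeasurableSet (Su k) := by
      intro k
      exact measurableSet_Icc.inter ((hxmeas k) (measurableSet_singleton 0).compl)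
    have hADisj : Pairwise (Function.onFun (AEDisjoint volume) Su) := by
      intro i j hij
      have h0 := hdisj i j hij
      rw [ae_iff] at h0
      unfold mu01 at h0
      have hms : MeasurableSet {a : ℝ | ¬ x i a * x j a = 0} :=
        (((hxmeas i).mul (hxmeas j)) (measurableSet_singleton 0)).compl
      have h0' : volume ({a : ℝ | ¬ x i a * x j a = 0} ∩ Icc (0:ℝ) 1) = 0 := by
        rw [← Measure.restrict_apply hms]
        exact h0
      refine measure_mono_null ?_ h0'
      rintro s ⟨⟨hsIcc, hxi⟩, ⟨_, hxj⟩⟩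
      exact ⟨mul_ne_zero hxi hxj, hsIcc⟩
    have hsum : ∑' k, volume (Su k) ≤ 1 := by
      rw [← measure_iUnion₀ hADisj (fun k => (hSmeas k).nullMeasurableSet)]
      refine le_trans (measure_mono (iUnion_subset fun k => inter_subset_left)) ?_
      rw [hvol1]
    have hex : ∃ n, volume (Su n) ≤ ENNReal.ofReal t' := by
      by_contra hcon
      push_neg at hcon
      have htop : (⊤:ℝ≥0∞) ≤ ∑' k, volume (Su k) := by
        have h1 : ∑' _ : ℕ, ENNReal.ofReal t' = ⊤ :=
          ENNReal.tsum_const_eq_top_of_ne_zero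
            (by simp only [ne_eq, ENNReal.ofReal_eq_zero, not_le]; exact ht'0)
        rw [← h1]
        exact ENNReal.tsum_le_tsum fun k => (hcon k).le
      have : (⊤:ℝ≥0∞) ≤ 1 := le_trans htop hsum
      simp at this
    obtain ⟨n, hSn⟩ := hex
    have hsupp : volume {s ∈ Icc (0:ℝ) 1 | x n s ≠ 0} ≤ ENNReal.ofReal t' := by
      refine le_trans (le_of_eq ?_) hSn
      congr 1
    have hkey := keylemma NE φ hφpos hfund t' ⟨ht'0, ht'1⟩ (x n) (hxmeas n) hsupp
    have hxn := hspan (x n) (Submodule.subset_span (Set.mem_range_self n))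
    have hchain : NE.N (x n) ≤ ENNReal.ofReal (B * (t' / φ t')) * NE.N (x n) := by
      calc NE.N (x n) ≤ ENNReal.ofReal B
            * (∫⁻ s in Set.Icc (0:ℝ) 1, ENNReal.ofReal |x n s|) := hxn
        _ ≤ ENNReal.ofReal B * (ENNReal.ofReal (t' / φ t') * NE.N (x n)) :=
            mul_le_mul_right hkey _
        _ = ENNReal.ofReal (B * (t' / φ t')) * NE.N (x n) := by
            rw [← mul_assoc, ← ENNReal.ofReal_mul hB.le]
    have hρ : ENNReal.ofReal (B * (t' / φ t')) < 1 := by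
      rw [show (1:ℝ≥0∞) = ENNReal.ofReal 1 by simp]
      refine ENNReal.ofReal_lt_ofReal_iff_of_nonneg (by positivity) |>.2 ?_
      calc B * (t' / φ t') < B * (1/(2*B)) := mul_lt_mul_of_pos_left ht'lt hB
        _ = 1/2 := by field_simp
        _ < 1 := by norm_num
    obtain ⟨hpos, hfin⟩ := hxpos n
    have hlt : NE.N (x n) < NE.N (x n) := by
      calc NE.N (x n) ≤ ENNReal.ofReal (B * (t' / φ t')) * NE.N (x n) := hchain
        _ < 1 * NE.N (x n) := ENNReal.mul_lt_mul_left hpos.ne' hfin.ne hρ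
        _ = NE.N (x n) := one_mul _
    exact absurd hlt (lt_irrefl _)
end
end
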